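/- arXiv:0802.0650 — 9 statements merged into one kernel-verified Lean document; each statement's English description precedes it below -/
import Mathlib

section
/- In a smooth manifold with a symmetric (torsion-free) connection, the cyclic sum over indices (a,b,c,d) of the second covariant derivative of the Riemann tensor satisfies ∇_(a∇_b R_{cd)e}^f = R_{(abc}^m R_{d)me}^f − R_{ace}^m R_{bdm}^f + R_{acm}^f R_{bde}^m, where (abcd) denotes the cyclic summation over permutations of a,b,c,d. -/
open Finset

theorem second_order_identity {ι : Type*} [Fintype ι] [DecidableEq ι]
    (R : ι → ι → ι → ι → ℝ)            -- R a b c d = R_{abc}{}^d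
    (DR : ι → ι → ι → ι → ι → ℝ)        -- DR x a b c d = ∇_x R_{abc}{}^d
    (D2R : ι → ι → ι → ι → ι → ι → ℝ)   -- D2R x y a b c d = ∇_x ∇_y R_{abc}{}^d
    (hAnti : ∀ a b c d, R a b c d = - R b a c d)
    (hDAnti : ∀ x a b c d, DR x a b c d = - DR x b a c d)
    (hD2Anti : ∀ x y a b c d, D2R x y a b c d = - D2R x y b a c d)
    (hB1 : ∀ a b c d, R a b c d + R b c a d + R c a b d = 0)
    (hB2 : ∀ a b c d e, DR a b c d e + DR b c a d e + DR c a b d e = 0)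
    (hDB2 : ∀ x a b c d e,
      D2R x a b c d e + D2R x b c a d e + D2R x c a b d e = 0)
    (hComm : ∀ x y c d e f,
      D2R x y c d e f - D2R y x c d e f =
        - (∑ k, R x y c k * R k d e f) - (∑ k, R x y d k * R c k e f)
        - (∑ k, R x y e k * R c d k f) + (∑ k, R x y k f * R c d e k))
    :
    ∀ a b c d e f,
      D2R a b c d e f + D2R b c d a e f + D2R c d a b e f + D2R d a b c e f
      = (∑ m, (R a b c m * R d m e f + R b c d m * R a m e f
               + R c d a m * R b m e f + R d a b m * R c m e f))
        - (∑ m, R a c e m * R b d m f) + (∑ m, R a c m f * R b d e m) := by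
  intro a b c d e f
  have key : ∑ k, ((0:ℝ) + R a c d k * R k b e f + R a c b k * R d k e f + R a c e k * R d b k f - R a c k f * R d b e k + R b d a k * R k c e f + R b d c k * R a k e f + R b d e k * R a c k f - R b d k f * R a c e k + R a d b k * R k c e f + R a d c k * R b k e f + R a d e k * R b c k f - R a d k f * R b c e k + R b a c k * R k d e f + R b a d k * R c k e f + R b a e k * R c d k f - R b a k f * R c d e k + R c b d k * R k a e f + R c b a k * R d k e f + R c b e k * R d a k f - R c b k f * R d a e k + R d c a k * R k b e f + R d c b k * R a k e f + R d c e k * R a b k f - R d c k f * R a b e k)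
      = ∑ k, ((0:ℝ) + R a b c k * R d k e f + R a b c k * R d k e f + R b c d k * R a k e f + R b c d k * R a k e f + R c d a k * R b k e f + R c d a k * R b k e f + R d a b k * R c k e f + R d a b k * R c k e f - R a c e k * R b d k f - R a c e k * R b d k f + R a c k f * R b d e k + R a c k f * R b d e k) := by
    refine Finset.sum_congr rfl fun k _ => ?_
    linear_combination (0:ℝ) + (-2:ℝ) * R d k e f * (hAnti a b c k) + R c k e f * (hAnti a b d k) + R c d k f * (hAnti a b e k) - R k b e f * (hAnti a c d k) - R c k e f * (hAnti a d b k) + (2:ℝ) * R b k e f * (hAnti a d c k) + R c b e k * (hAnti a d k f) - R c d e k * (hAnti b a k f) - R a k e f * (hAnti b c d k) + R k a e f * (hAnti b c d k) - R a d k f * (hAnti c b e k) - R d a e k * (hAnti c b k f) + R b c k f * (hAnti d a e k) - R a c k f * (hAnti d b e k) + R a c e k * (hAnti d b k f) + R a b k f * (hAnti d c e k) - R b c d k * (hAnti k a e f) + (2:ℝ) * R a c d k * (hAnti k b e f) - R a d c k * (hAnti k b e f) + R a b e k * (hAnti k c d f) + R a d b k * (hAnti k c e f) + R b d a k * (hAnti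 k c e f) + R a b e k * (hAnti k d c f) + R b a c k * (hAnti k d e f) - R c k e f * (hB1 a b d k) + (-2:ℝ) * R b k e f * (hB1 a c d k) + R k b e f * (hB1 a d c k) + R d k e f * (hB1 c b a k) + R a k e f * (hB1 c b d k) - R a b e k * (hB1 k c d f) - R a b e k * (hB1 k d c f)
  simp only [Finset.sum_add_distrib, Finset.sum_sub_distrib] at key ⊢
  linear_combination (1/2 : ℝ) * (hDB2 a b c d e f + hDB2 b c d a e f + hDB2 c d a b e f + hDB2 d a b c e f)
    - (1/2 : ℝ) * (hComm a c d b e f + hComm b d a c e f + hComm a d b c e f + hComm b a c d e f + hComm c b d a e f + hComm d c a b e f)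
    - (1/2 : ℝ) * (hD2Anti c a b d e f + hD2Anti d b c a e f)
    + (1/2 : ℝ) * key
end

section
/- (Lovelock's differential identity) In a smooth manifold with symmetric connection, ∇_a∇_m R_{bce}^m + ∇_b∇_m R_{cae}^m + ∇_c∇_m R_{abe}^m = R_{am}R_{bce}^m + R_{bm}R_{cae}^m + R_{cm}R_{abe}^m. -/
open Finset

theorem lovelock_identity {ι : Type*} [Fintype ι] [DecidableEq ι]
    (R : ι → ι → ι → ι → ℝ)            -- R a b c d = R_{abc}{}^d
    (DR : ι → ι → ι → ι → ι → ℝ)        -- DR x a b c d = ∇_x R_{abc}{}^d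
    (D2R : ι → ι → ι → ι → ι → ι → ℝ)   -- D2R x y a b c d = ∇_x ∇_y R_{abc}{}^d
    (hAnti : ∀ a b c d, R a b c d = - R b a c d)
    (hDAnti : ∀ x a b c d, DR x a b c d = - DR x b a c d)
    (hD2Anti : ∀ x y a b c d, D2R x y a b c d = - D2R x y b a c d)
    (hB1 : ∀ a b c d, R a b c d + R b c a d + R c a b d = 0)
    (hB2 : ∀ a b c d e, DR a b c d e + DR b c a d e + DR c a b d e = 0)
    (hDB2 : ∀ x a b c d e,
      D2R x a b c d e + D2R x b c a d e + D2R x c a b d e = 0)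
    (hComm : ∀ x y c d e f,
      D2R x y c d e f - D2R y x c d e f =
        - (∑ k, R x y c k * R k d e f) - (∑ k, R x y d k * R c k e f)
        - (∑ k, R x y e k * R c d k f) + (∑ k, R x y k f * R c d e k))
    :
    ∀ a b c e,
      (∑ m, D2R a m b c e m) + (∑ m, D2R b m c a e m) + (∑ m, D2R c m a b e m)
      = (∑ m, (∑ k, R a k m k) * R b c e m)
        + (∑ m, (∑ k, R b k m k) * R c a e m)
        + (∑ m, (∑ k, R c k m k) * R a b e m) := by
  intro a b c e
  -- Step 1: contracted second Bianchi (differentiated once)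
  have step1 : ∀ x y z : ι, (∑ m, D2R x m y z e m)
      = (∑ m, D2R x z y m e m) - (∑ m, D2R x y z m e m) := by
    intro x y z
    rw [← Finset.sum_sub_distrib]
    refine Finset.sum_congr rfl fun m _ => ?_
    have h := hDB2 x m y z e m
    have h2 := hD2Anti x z m y e m
    linarith
  -- Step 2: commutator of second covariant derivatives on the Ricci contraction
  have comm2 : ∀ x y z : ι, (∑ m, D2R y x z m e m) - (∑ m, D2R x y z m e m)
      = (∑ k, R x y z k * (∑ m, R k m e m)) + (∑ k, R x y e k * (∑ m, R z m k m)) := by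
    intro x y z
    have h2 : (∑ m, D2R x y z m e m) - (∑ m, D2R y x z m e m)
        = ∑ m, (- (∑ k, R x y z k * R k m e m) - (∑ k, R x y m k * R z k e m)
          - (∑ k, R x y e k * R z m k m) + (∑ k, R x y k m * R z m e k)) := by
      rw [← Finset.sum_sub_distrib]
      exact Finset.sum_congr rfl fun m _ => hComm x y z m e m
    have h3 : (∑ m, ∑ k, R x y m k * R z k e m) = ∑ m, ∑ k, R x y k m * R z m e k :=
      Finset.sum_comm
    have h4 : (∑ k, R x y z k * (∑ m, R k m e m)) = ∑ m, ∑ k, R x y z k * R k m e m := by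
      simp only [Finset.mul_sum]
      exact Finset.sum_comm
    have h5 : (∑ k, R x y e k * (∑ m, R z m k m)) = ∑ m, ∑ k, R x y e k * R z m k m := by
      simp only [Finset.mul_sum]
      exact Finset.sum_comm
    have h6 : (∑ m, (- (∑ k, R x y z k * R k m e m) - (∑ k, R x y m k * R z k e m)
          - (∑ k, R x y e k * R z m k m) + (∑ k, R x y k m * R z m e k)))
        = - (∑ m, ∑ k, R x y z k * R k m e m) - (∑ m, ∑ k, R x y m k * R z k e m)
          - (∑ m, ∑ k, R x y e k * R z m k m) + (∑ m, ∑ k, R x y k m * R z m e k) := by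
      simp [Finset.sum_add_distrib, Finset.sum_sub_distrib]
    rw [h6] at h2
    linarith
  -- Bianchi contraction
  have hb : (∑ k, R a b c k * (∑ m, R k m e m)) + (∑ k, R c a b k * (∑ m, R k m e m))
      + (∑ k, R b c a k * (∑ m, R k m e m)) = 0 := by
    rw [← Finset.sum_add_distrib, ← Finset.sum_add_distrib]
    refine Finset.sum_eq_zero fun k _ => ?_
    have h := hB1 a b c k
    have : R a b c k + R c a b k + R b c a k = 0 := by linarith
    rw [← add_mul, ← add_mul, this, zero_mul]
  -- Match RHS shapes
  have r1 : (∑ m, (∑ k, R a k m k) * R b c e m) = ∑ k, R b c e k * (∑ m, R a m k m) :=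
    Finset.sum_congr rfl fun m _ => mul_comm _ _
  have r2 : (∑ m, (∑ k, R b k m k) * R c a e m) = ∑ k, R c a e k * (∑ m, R b m k m) :=
    Finset.sum_congr rfl fun m _ => mul_comm _ _
  have r3 : (∑ m, (∑ k, R c k m k) * R a b e m) = ∑ k, R a b e k * (∑ m, R c m k m) :=
    Finset.sum_congr rfl fun m _ => mul_comm _ _
  have e1 := step1 a b c
  have e2 := step1 b c a
  have e3 := step1 c a b
  have c1 := comm2 a b c
  have c2 := comm2 c a b
  have c3 := comm2 b c a
  rw [e1, e2, e3, r1, r2, r3]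
  linarith
end

section
/- In a locally symmetric Riemannian manifold (∇_a R_{bcd}^e = 0), the following algebraic identities hold: (i) R_{(abc}^m R_{d)me}^f − R_{ace}^m R_{bdm}^f + R_{acm}^f R_{bde}^m = 0; (ii) R_{am}R_{bce}^m + R_{bm}R_{cae}^m + R_{cm}R_{abe}^m = 0; (iii) R_{am}R_{bec}^m − R_{bm}R_{ace}^m + R_{cm}R_{eba}^m − R_{em}R_{cab}^m = 0. -/
open Finset

theorem locally_symmetric_identities {ι : Type*} [Fintype ι] [DecidableEq ι]
    (R : ι → ι → ι → ι → ℝ)            -- R a b c d = R_{abc}{}^d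
    (DR : ι → ι → ι → ι → ι → ℝ)        -- DR x a b c d = ∇_x R_{abc}{}^d
    (D2R : ι → ι → ι → ι → ι → ι → ℝ)   -- D2R x y a b c d = ∇_x ∇_y R_{abc}{}^d
    (hAnti : ∀ a b c d, R a b c d = - R b a c d)
    (hDAnti : ∀ x a b c d, DR x a b c d = - DR x b a c d)
    (hD2Anti : ∀ x y a b c d, D2R x y a b c d = - D2R x y b a c d)
    (hB1 : ∀ a b c d, R a b c d + R b c a d + R c a b d = 0)
    (hB2 : ∀ a b c d e, DR a b c d e + DR b c a d e + DR c a b d e = 0)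
    (hDB2 : ∀ x a b c d e,
      D2R x a b c d e + D2R x b c a d e + D2R x c a b d e = 0)
    (hComm : ∀ x y c d e f,
      D2R x y c d e f - D2R y x c d e f =
        - (∑ k, R x y c k * R k d e f) - (∑ k, R x y d k * R c k e f)
        - (∑ k, R x y e k * R c d k f) + (∑ k, R x y k f * R c d e k))
    (g ginv : ι → ι → ℝ)
    (hg : ∀ a b, g a b = g b a)
    (hginvsym : ∀ a b, ginv a b = ginv b a)
    (hginv : ∀ a b, (∑ m, ginv a m * g m b) = if a = b then (1:ℝ) else 0)
    (hPair : ∀ a b c d, (∑ e, R a b c e * g e d) = ∑ e, R c d a e * g e b)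
    (hLS : ∀ x a b c d, DR x a b c d = 0)
    (hLS2 : ∀ x y a b c d, D2R x y a b c d = 0) :
    (∀ a b c d e f,
      (∑ m, (R a b c m * R d m e f + R b c d m * R a m e f
             + R c d a m * R b m e f + R d a b m * R c m e f))
      - (∑ m, R a c e m * R b d m f) + (∑ m, R a c m f * R b d e m) = 0)
    ∧ (∀ a b c e,
      (∑ m, (∑ k, R a k m k) * R b c e m) + (∑ m, (∑ k, R b k m k) * R c a e m)
      + (∑ m, (∑ k, R c k m k) * R a b e m) = 0)
    ∧ (∀ a b c e,
      (∑ m, (∑ k, R a k m k) * R b e c m) - (∑ m, (∑ k, R b k m k) * R a c e m)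
      + (∑ m, (∑ k, R c k m k) * R e b a m) - (∑ m, (∑ k, R e k m k) * R c a b m) = 0) := by
  have E0c : ∀ x y p q u v,
      (∑ j, (R x y p j * R j q u v + R x y q j * R p j u v
        + R x y u j * R p q j v - R x y j v * R p q u j)) = 0 := by
    intro x y p q u v
    have h := hComm x y p q u v
    rw [hLS2, hLS2] at h
    simp only [Finset.sum_add_distrib, Finset.sum_sub_distrib]
    linear_combination h
  have inner : ∀ p q w, (∑ x, ginv w x * ∑ j, R p w q j * g j x) = R p w q w := by
    intro p q w
    have step1 : ∀ x, ginv w x * (∑ j, R p w q j * g j x)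
        = ∑ j, R p w q j * (ginv w x * g x j) := by
      intro x
      rw [Finset.mul_sum]
      exact Finset.sum_congr rfl fun j _ => by rw [hg j x]; ring
    rw [Finset.sum_congr rfl fun x _ => step1 x, Finset.sum_comm]
    have step2 : ∀ j, (∑ x, R p w q j * (ginv w x * g x j))
        = R p w q j * (if w = j then 1 else 0) := by
      intro j
      rw [← Finset.mul_sum, hginv]
    rw [Finset.sum_congr rfl fun j _ => step2 j]
    simp
  have RicSym : ∀ p q, (∑ k, R p k q k) = ∑ k, R q k p k := by
    intro p q
    calc (∑ k, R p k q k)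
        = ∑ w, ∑ x, ginv w x * ∑ j, R p w q j * g j x :=
          Finset.sum_congr rfl fun w _ => (inner p q w).symm
      _ = ∑ w, ∑ x, ginv w x * ∑ j, R q x p j * g j w :=
          Finset.sum_congr rfl fun w _ => Finset.sum_congr rfl fun x _ => by
            rw [hPair p w q x]
      _ = ∑ w, ∑ x, ginv x w * ∑ j, R q w p j * g j x := Finset.sum_comm
      _ = ∑ w, ∑ x, ginv w x * ∑ j, R q w p j * g j x :=
          Finset.sum_congr rfl fun w _ => Finset.sum_congr rfl fun x _ => by
            rw [hginvsym x w]
      _ = ∑ k, R q k p k := Finset.sum_congr rfl fun w _ => inner q p w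
  have part2 : ∀ a b c e,
      (∑ m, (∑ k, R a k m k) * R b c e m) + (∑ m, (∑ k, R b k m k) * R c a e m)
      + (∑ m, (∑ k, R c k m k) * R a b e m) = 0 := by
    intro a b c e
    have F1 : (∑ m, ∑ k, (R m a b k * R k c e m + R m a c k * R b k e m + R m a e k * R b c k m - R m a k m * R b c e k)) = 0 :=
      Finset.sum_eq_zero fun m _ => E0c m a b c e m
    have F2 : (∑ m, ∑ k, (R m b a k * R k c e m + R m b c k * R a k e m + R m b e k * R a c k m - R m b k m * R a c e k)) = 0 :=
      Finset.sum_eq_zero fun m _ => E0c m b a c e m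
    have F3 : (∑ m, ∑ k, (R m c a k * R k b e m + R m c b k * R a k e m + R m c e k * R a b k m - R m c k m * R a b e k)) = 0 :=
      Finset.sum_eq_zero fun m _ => E0c m c a b e m
    have F4 : (∑ m, ∑ k, (R a b m k * R k c e m + R a b c k * R m k e m + R a b e k * R m c k m - R a b k m * R m c e k)) = 0 :=
      Finset.sum_eq_zero fun m _ => E0c a b m c e m
    have F5 : (∑ m, ∑ k, (R a b m k * R k e c m + R a b e k * R m k c m + R a b c k * R m e k m - R a b k m * R m e c k)) = 0 :=
      Finset.sum_eq_zero fun m _ => E0c a b m e c m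
    have F6 : (∑ m, ∑ k, R c k m k * R a b e m) = (∑ m, ∑ k, R m k c k * R a b e m) :=
      Finset.sum_congr rfl fun m _ => by rw [← Finset.sum_mul, ← Finset.sum_mul, RicSym c m]
    have F7 : (∑ m, ∑ k, R e k m k * R a b c m) = (∑ m, ∑ k, R m k e k * R a b c m) :=
      Finset.sum_congr rfl fun m _ => by rw [← Finset.sum_mul, ← Finset.sum_mul, RicSym e m]
    have F8 : (∑ m, ∑ k, R a b c m * R e m k k) = (∑ m, ∑ k, R a b c k * R e k m m) := Finset.sum_comm
    have F9 : (∑ m, ∑ k, R a b e m * R m k c k) = (∑ m, ∑ k, R a b e k * R k m c m) := Finset.sum_comm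
    have F10 : (∑ m, ∑ k, R a b m k * R e k c m) = (∑ m, ∑ k, R a b k m * R e m c k) := Finset.sum_comm
    have F11 : (∑ m, ∑ k, R a c e m * R b m k k) = (∑ m, ∑ k, R a c e k * R b k m m) := Finset.sum_comm
    have F12 : (∑ m, ∑ k, R a c e m * R m k b k) = (∑ m, ∑ k, R a c e k * R k m b m) := Finset.sum_comm
    have F13 : (∑ m, ∑ k, R a c m k * R b e k m) = (∑ m, ∑ k, R a c k m * R b e m k) := Finset.sum_comm
    have F14 : (∑ m, ∑ k, R a c m k * R e k b m) = (∑ m, ∑ k, R a c k m * R e m b k) := Finset.sum_comm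
    have F15 : (∑ m, ∑ k, R a e m k * R b c k m) = (∑ m, ∑ k, R a e k m * R b c m k) := Finset.sum_comm
    have F16 : (∑ m, ∑ k, R a m k m * R b c e k) = (∑ m, ∑ k, R a k m k * R b c e m) := Finset.sum_comm
    have F17 : (∑ m, ∑ k, R b c m k * R e k a m) = (∑ m, ∑ k, R b c k m * R e m a k) := Finset.sum_comm
    have master : (∑ m, (∑ k, R a k m k) * R b c e m)
        + (∑ m, (∑ k, R b k m k) * R c a e m)
        + (∑ m, (∑ k, R c k m k) * R a b e m) = (∑ m, ∑ k, (R m a b k * R k c e m + R m a c k * R b k e m + R m a e k * R b c k m - R m a k m * R b c e k)) - (∑ m, ∑ k, (R m b a k * R k c e m + R m b c k * R a k e m + R m b e k * R a c k m - R m b k m * R a c e k)) + (∑ m, ∑ k, (R m c a k * R k b e m + R m c b k * R a k e m + R m c e k * R a b k m - R m c k m * R a b e k)) + (∑ m, ∑ k, (R a b m k * R k c e m + R a b c k * R m k e m + R a b e k * R m c k m - R a b k m * R m c e k)) - (∑ m, ∑ k, (R a b m k * R k e c m + R a b e k * R m k c m + R a b c k * R m e k m - R a b k m * R m e c k)) +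 ((∑ m, ∑ k, R c k m k * R a b e m) - (∑ m, ∑ k, R m k c k * R a b e m)) - ((∑ m, ∑ k, R e k m k * R a b c m) - (∑ m, ∑ k, R m k e k * R a b c m)) + ((∑ m, ∑ k, R a b c m * R e m k k) - (∑ m, ∑ k, R a b c k * R e k m m)) + ((∑ m, ∑ k, R a b e m * R m k c k) - (∑ m, ∑ k, R a b e k * R k m c m)) - ((∑ m, ∑ k, R a b m k * R e k c m) - (∑ m, ∑ k, R a b k m * R e m c k)) - ((∑ m, ∑ k, R a c e m * R b m k k) - (∑ m, ∑ k, R a c e k * R b k m m)) - ((∑ m, ∑ k, R a c e m * R m k b k) - (∑ m, ∑ k, R a c e k * R k m b m)) + ((∑ m, ∑ k, R a c m k * R b e k m) - (∑ m, ∑ k, R a c k m * R b e m k)) + ((∑ m, ∑ k, R a c m k * R e k b m) - (∑ m, ∑ k, R a c k m * R e m b k)) + ((∑ m, ∑ k, R a e m k * R b c k m) - (∑ m, ∑ k, R a e k m * R b c m k)) - ((∑ m, ∑ k, R a m k m * R b c e k) - (∑ m, ∑ k, R a k m k * R b c e m)) - ((∑ m, ∑ k, R b c m k * R e k a m) - (∑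 m, ∑ k, R b c k m * R e m a k)) := by
      simp only [Finset.sum_mul]
      simp only [← Finset.sum_add_distrib, ← Finset.sum_sub_distrib]
      exact Finset.sum_congr rfl fun m _ => Finset.sum_congr rfl fun k _ => by
        linear_combination (-(R b c m k)) * (hAnti a k e m) + (R k c e m) * (hAnti a m b k) + (R b k e m) * (hAnti a m c k) + (R b c k m) * (hAnti a m e k) + (R a c m k) * (hAnti b k e m) + (R c a e m) * (hAnti b k m k) + (-(R a c e k)) * (hAnti b k m m) + (-(R a k e m)) * (hAnti b m c k) + (-(R a c k m)) * (hAnti b m e k) + (R b m k k) * (hAnti c a e m) + (R m k b k) * (hAnti c a e m) + (R a b c m) * (hAnti e k m k) + (R a b c k) * (hAnti e k m m) + (R c m a k) * (hAnti k b e m) + (R a b m k) * (hAnti k e c m) + (-(R a c e k)) * (hAnti k m b m) + (R a b e k) * (hAnti k m c m) + (-(R k c e m)) * (hAnti m a b k) + (-(R b k e m)) * (hAnti m a c k) + (-(R b c k m)) * (hAnti m a e k) + (R b c e k) * (hAnti m a k m) + (R k c e m) * (hAnti m b a k) + (R a k e m) * (hAnti m b c k) + (R a c k m) * (hAnti m b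 e k) + (-(R a c e k)) * (hAnti m b k m) + (-(R k b e m)) * (hAnti m c a k) + (-(R a k e m)) * (hAnti m c b k) + (-(R a b k m)) * (hAnti m e c k) + (R a b c k) * (hAnti m e k m) + (-(R k c e m)) * (hB1 a b m k) + (-(R b k e m)) * (hB1 a c m k) + (R b c m k) * (hB1 a e k m) + (-(R b c k m)) * (hB1 a e m k) + (R a k e m) * (hB1 b c m k) + (-(R a c m k)) * (hB1 b e k m) + (R a c k m) * (hB1 b e m k) + (-(R c a e m)) * (hB1 b m k k) + (R a c e k) * (hB1 b m k m) + (-(R a b c m)) * (hB1 e m k k) + (-(R a b c k)) * (hB1 e m k m)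
    exact master.trans (by linear_combination F1 - F2 + F3 + F4 - F5 + F6 - F7 + F8 + F9 - F10 - F11 - F12 + F13 + F14 + F15 - F16 - F17)
  refine ⟨?_, part2, ?_⟩
  · intro a b c d e f
    have master : (∑ m, (R a b c m * R d m e f + R b c d m * R a m e f
             + R c d a m * R b m e f + R d a b m * R c m e f))
        - (∑ m, R a c e m * R b d m f) + (∑ m, R a c m f * R b d e m)
        = (∑ m, (R b c a m * R m d e f + R b c d m * R a m e f + R b c e m * R a d m f - R b c m f * R a d e m)) + (∑ m, (R a d b m * R m c e f + R a d c m * R b m e f + R a d e m * R b c m f - R a d m f * R b c e m))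
          - (∑ m, (R a c b m * R m d e f + R a c d m * R b m e f + R a c e m * R b d m f - R a c m f * R b d e m)) := by
      simp only [← Finset.sum_add_distrib, ← Finset.sum_sub_distrib]
      exact Finset.sum_congr rfl fun m _ => by
        linear_combination (R m d e f) * (hAnti a c b m) + (-(R c m e f)) * (hAnti a d b m) + (-(R m c e f)) * (hAnti a d b m) + (-(R b m e f)) * (hAnti a d c m) + (R c m e f) * (hAnti d a b m) + (-(R a b d m)) * (hAnti m c e f) + (-(R b d a m)) * (hAnti m c e f) + (R a b c m) * (hAnti m d e f) + (-(R m d e f)) * (hB1 a b c m) + (R c m e f) * (hB1 a b d m) + (R m c e f) * (hB1 a b d m) + (R b m e f) * (hB1 a c d m)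
    exact master.trans (by
      linear_combination E0c b c a d e f + E0c a d b c e f - E0c a c b d e f)
  · intro a b c e
    have h2a := part2 a b c e
    have h2b := part2 a c e b
    have master : (∑ m, (∑ k, R a k m k) * R b e c m) - (∑ m, (∑ k, R b k m k) * R a c e m)
      + (∑ m, (∑ k, R c k m k) * R e b a m) - (∑ m, (∑ k, R e k m k) * R c a b m)
        = ((∑ m, (∑ k, R a k m k) * R b c e m) + (∑ m, (∑ k, R b k m k) * R c a e m)
          + (∑ m, (∑ k, R c k m k) * R a b e m))
        + ((∑ m, (∑ k, R a k m k) * R c e b m) + (∑ m, (∑ k, R c k m k) * R e a b m)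
          + (∑ m, (∑ k, R e k m k) * R a c b m)) := by
      simp only [Finset.sum_mul]
      simp only [← Finset.sum_add_distrib, ← Finset.sum_sub_distrib]
      exact Finset.sum_congr rfl fun m _ => Finset.sum_congr rfl fun k _ => by
        linear_combination (R c m k k) * (hAnti a e b m) + (R m k c k) * (hAnti a e b m) + (-(R b c e m)) * (hAnti a k m k) + (R b e c m) * (hAnti a k m k) + (-(R c e b m)) * (hAnti a k m k) + (R a m k k) * (hAnti b e c m) + (R m k a k) * (hAnti b e c m) + (-(R a c e m)) * (hAnti b k m k) + (-(R c a e m)) * (hAnti b k m k) + (-(R e m k k)) * (hAnti c a b m) + (-(R m k e k)) * (hAnti c a b m) + (-(R b m k k)) * (hAnti c a e m) + (-(R m k b k)) * (hAnti c a e m) + (-(R a b e m)) * (hAnti c k m k) + (-(R e a b m)) * (hAnti c k m k) + (R e b a m) * (hAnti c k m k) + (-(R c m k k)) * (hAnti e a b m) + (-(R m k c k)) * (hAnti e a b m) + (R c m k k) * (hAnti e b a m) + (R m k c k) * (hAnti e b a m) + (-(R a c b m)) * (hAnti e k m k) + (-(R c a b m)) * (hAnti e k m k) + (-(R c m k k))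 * (hB1 a b e m) + (-(R m k c k)) * (hB1 a b e m) + (R b c e m) * (hB1 a m k k) + (-(R b e c m)) * (hB1 a m k k) + (R c e b m) * (hB1 a m k k) + (-(R a m k k)) * (hB1 b c e m) + (-(R m k a k)) * (hB1 b c e m) + (R a c e m) * (hB1 b m k k) + (R c a e m) * (hB1 b m k k) + (R a b e m) * (hB1 c m k k) + (R e a b m) * (hB1 c m k k) + (-(R e b a m)) * (hB1 c m k k) + (R a c b m) * (hB1 e m k k) + (R c a b m) * (hB1 e m k k)
    exact master.trans (by linear_combination h2a + h2b)
end

section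
/- In a Riemannian manifold with harmonic curvature (∇_m R_{bcd}^m = 0), the identities R_{am}R_{bce}^m + R_{bm}R_{cae}^m + R_{cm}R_{abe}^m = 0 and R_{am}R_{bec}^m − R_{bm}R_{ace}^m + R_{cm}R_{eba}^m − R_{em}R_{cab}^m = 0 hold. -/
open Finset

/-!
Differentiating the harmonicity condition `∇_m R_{bcd}{}^m = 0` once more and using the second
Bianchi identity gives the Codazzi symmetry `∇_x ∇_b R_{cd} = ∇_x ∇_c R_{bd}` of the Ricci
tensor. Hence the cyclic sum over `(a, b, c)` of the commutators `[∇_a, ∇_b] R_{ce}` vanishes.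
By the Ricci identity each commutator is `-R_{abc}{}^k R_{ke} - R_{abe}{}^k R_{ck}`; the first
terms cancel in the cyclic sum by the first Bianchi identity, and what is left is the first
identity. The second one follows from the first and the first Bianchi identity alone.
-/

section

variable {ι : Type*} [Fintype ι]

def ricci (R : ι → ι → ι → ι → ℝ) (a b : ι) : ℝ := ∑ k, R a k b k

theorem sum_mul_cyclic_eq_zero (R : ι → ι → ι → ι → ℝ)
    (hB1 : ∀ a b c d, R a b c d + R b c a d + R c a b d = 0) (f : ι → ℝ) (a b c : ι) :
    ∑ m, f m * R a b c m + ∑ m, f m * R b c a m + ∑ m, f m * R c a b m = 0 := by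
  rw [← sum_add_distrib, ← sum_add_distrib]
  exact sum_eq_zero fun m _ => by linear_combination f m * hB1 a b c m

theorem sum_mul_four_term_eq_zero_of_cyclic (R : ι → ι → ι → ι → ℝ)
    (hB1 : ∀ a b c d, R a b c d + R b c a d + R c a b d = 0) (S : ι → ι → ℝ)
    (hcyc : ∀ a b c e, ∑ m, S a m * R b c e m + ∑ m, S b m * R c a e m
      + ∑ m, S c m * R a b e m = 0) (a b c e : ι) :
    ∑ m, S a m * R b e c m - ∑ m, S b m * R a c e m
      + ∑ m, S c m * R e b a m - ∑ m, S e m * R c a b m = 0 := by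
  linear_combination hcyc a b e c + hcyc c e b a
    - sum_mul_cyclic_eq_zero R hB1 (S b) e a c - sum_mul_cyclic_eq_zero R hB1 (S e) a b c

theorem ricci_codazzi (T : ι → ι → ι → ι → ι → ℝ)
    (hAnti : ∀ x a b c d, T x a b c d = -T x b a c d)
    (hB2 : ∀ a b c d e, T a b c d e + T b c a d e + T c a b d e = 0)
    (hDiv : ∀ b c d, ∑ m, T m b c d m = 0) (b c d : ι) :
    ricci (T b) c d = ricci (T c) b d := by
  have hcyc : ∑ m, T m b c d m + ∑ m, T b c m d m + ∑ m, T c m b d m = 0 := by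
    rw [← sum_add_distrib, ← sum_add_distrib]
    exact sum_eq_zero fun m _ => hB2 m b c d m
  have hswap : ∑ m, T c m b d m = -ricci (T c) b d := by
    rw [ricci, ← sum_neg_distrib]
    exact sum_congr rfl fun m _ => hAnti c m b d m
  rw [hDiv, hswap] at hcyc
  rw [ricci]
  linarith

theorem ricci_sub_ricci_swap (R : ι → ι → ι → ι → ℝ) (D2R : ι → ι → ι → ι → ι → ι → ℝ)
    (hComm : ∀ x y c d e f,
      D2R x y c d e f - D2R y x c d e f =
        - (∑ k, R x y c k * R k d e f) - (∑ k, R x y d k * R c k e f)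
        - (∑ k, R x y e k * R c d k f) + (∑ k, R x y k f * R c d e k)) (x y c d : ι) :
    ricci (D2R x y) c d - ricci (D2R y x) c d =
      -(∑ k, ricci R k d * R x y c k) - ∑ k, ricci R c k * R x y d k := by
  have hB : ∑ m, ∑ k, R x y m k * R c k d m = ∑ m, ∑ k, R x y k m * R c m d k := sum_comm
  have hA : ∑ m, ∑ k, R x y c k * R k m d m = ∑ k, ricci R k d * R x y c k := by
    rw [sum_comm]; simp only [ricci, sum_mul]
    exact sum_congr rfl fun _ _ => sum_congr rfl fun _ _ => mul_comm _ _
  have hC : ∑ m, ∑ k, R x y d k * R c m k m = ∑ k, ricci R c k * R x y d k := by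
    rw [sum_comm]; simp only [ricci, sum_mul]
    exact sum_congr rfl fun _ _ => sum_congr rfl fun _ _ => mul_comm _ _
  rw [ricci, ricci, ← sum_sub_distrib, sum_congr rfl fun m _ => hComm x y c m d m]
  simp only [sum_add_distrib, sum_sub_distrib, sum_neg_distrib]
  rw [hA, hB, hC]
  ring

theorem sum_ricci_mul_cyclic_eq_zero (R : ι → ι → ι → ι → ℝ)
    (D2R : ι → ι → ι → ι → ι → ι → ℝ)
    (hB1 : ∀ a b c d, R a b c d + R b c a d + R c a b d = 0)
    (hComm : ∀ x y c d e f,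
      D2R x y c d e f - D2R y x c d e f =
        - (∑ k, R x y c k * R k d e f) - (∑ k, R x y d k * R c k e f)
        - (∑ k, R x y e k * R c d k f) + (∑ k, R x y k f * R c d e k))
    (hCodazzi : ∀ x b c d, ricci (D2R x b) c d = ricci (D2R x c) b d) (a b c e : ι) :
    ∑ m, ricci R a m * R b c e m + ∑ m, ricci R b m * R c a e m
      + ∑ m, ricci R c m * R a b e m = 0 := by
  have hz := sum_mul_cyclic_eq_zero R hB1 (ricci R · e) a b c
  linear_combination -hz + ricci_sub_ricci_swap R D2R hComm a b c e
    + ricci_sub_ricci_swap R D2R hComm b c a e + ricci_sub_ricci_swap R D2R hComm c a b e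
    - hCodazzi a b c e - hCodazzi b c a e - hCodazzi c a b e

end

theorem harmonic_curvature_identities_general {ι : Type*} [Fintype ι]
    (R : ι → ι → ι → ι → ℝ)            -- R a b c d = R_{abc}{}^d
    (D2R : ι → ι → ι → ι → ι → ι → ℝ)   -- D2R x y a b c d = ∇_x ∇_y R_{abc}{}^d
    (hD2Anti : ∀ x y a b c d, D2R x y a b c d = - D2R x y b a c d)
    (hB1 : ∀ a b c d, R a b c d + R b c a d + R c a b d = 0)
    (hDB2 : ∀ x a b c d e,
      D2R x a b c d e + D2R x b c a d e + D2R x c a b d e = 0)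
    (hComm : ∀ x y c d e f,
      D2R x y c d e f - D2R y x c d e f =
        - (∑ k, R x y c k * R k d e f) - (∑ k, R x y d k * R c k e f)
        - (∑ k, R x y e k * R c d k f) + (∑ k, R x y k f * R c d e k))
    (hHarm2 : ∀ x b c d, (∑ m, D2R x m b c d m) = 0) :
    (∀ a b c e,
      (∑ m, (∑ k, R a k m k) * R b c e m) + (∑ m, (∑ k, R b k m k) * R c a e m)
      + (∑ m, (∑ k, R c k m k) * R a b e m) = 0)
    ∧ (∀ a b c e,
      (∑ m, (∑ k, R a k m k) * R b e c m) - (∑ m, (∑ k, R b k m k) * R a c e m)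
      + (∑ m, (∑ k, R c k m k) * R e b a m) - (∑ m, (∑ k, R e k m k) * R c a b m) = 0) := by
  have hCodazzi x := ricci_codazzi (D2R x) (hD2Anti x) (hDB2 x) (hHarm2 x)
  have hcyc := sum_ricci_mul_cyclic_eq_zero R D2R hB1 hComm hCodazzi
  exact ⟨hcyc, sum_mul_four_term_eq_zero_of_cyclic R hB1 (ricci R) hcyc⟩

theorem harmonic_curvature_identities {ι : Type*} [Fintype ι] [DecidableEq ι]
    (R : ι → ι → ι → ι → ℝ)            -- R a b c d = R_{abc}{}^d
    (DR : ι → ι → ι → ι → ι → ℝ)        -- DR x a b c d = ∇_x R_{abc}{}^d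
    (D2R : ι → ι → ι → ι → ι → ι → ℝ)   -- D2R x y a b c d = ∇_x ∇_y R_{abc}{}^d
    (hAnti : ∀ a b c d, R a b c d = - R b a c d)
    (hDAnti : ∀ x a b c d, DR x a b c d = - DR x b a c d)
    (hD2Anti : ∀ x y a b c d, D2R x y a b c d = - D2R x y b a c d)
    (hB1 : ∀ a b c d, R a b c d + R b c a d + R c a b d = 0)
    (hB2 : ∀ a b c d e, DR a b c d e + DR b c a d e + DR c a b d e = 0)
    (hDB2 : ∀ x a b c d e,
      D2R x a b c d e + D2R x b c a d e + D2R x c a b d e = 0)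
    (hComm : ∀ x y c d e f,
      D2R x y c d e f - D2R y x c d e f =
        - (∑ k, R x y c k * R k d e f) - (∑ k, R x y d k * R c k e f)
        - (∑ k, R x y e k * R c d k f) + (∑ k, R x y k f * R c d e k))
    (g ginv : ι → ι → ℝ)
    (hg : ∀ a b, g a b = g b a)
    (hginvsym : ∀ a b, ginv a b = ginv b a)
    (hginv : ∀ a b, (∑ m, ginv a m * g m b) = if a = b then (1:ℝ) else 0)
    (hPair : ∀ a b c d, (∑ e, R a b c e * g e d) = ∑ e, R c d a e * g e b)
    (hHarm : ∀ b c d, (∑ m, DR m b c d m) = 0)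
    (hHarm2 : ∀ x b c d, (∑ m, D2R x m b c d m) = 0) :
    (∀ a b c e,
      (∑ m, (∑ k, R a k m k) * R b c e m) + (∑ m, (∑ k, R b k m k) * R c a e m)
      + (∑ m, (∑ k, R c k m k) * R a b e m) = 0)
    ∧ (∀ a b c e,
      (∑ m, (∑ k, R a k m k) * R b e c m) - (∑ m, (∑ k, R b k m k) * R a c e m)
      + (∑ m, (∑ k, R c k m k) * R e b a m) - (∑ m, (∑ k, R e k m k) * R c a b m) = 0) :=
  harmonic_curvature_identities_general R D2R hD2Anti hB1 hDB2 hComm hHarm2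
end

section
/- In a semisymmetric Riemannian manifold, i.e. one with [∇_a, ∇_b] R_{cdef} = 0 for all indices, the three algebraic identities hold: (i) R_{(abc}^m R_{d)me}^f − R_{ace}^m R_{bdm}^f + R_{acm}^f R_{bde}^m = 0; (ii) R_{am}R_{bce}^m + R_{bm}R_{cae}^m + R_{cm}R_{abe}^m = 0; (iii) R_{am}R_{bec}^m − R_{bm}R_{ace}^m + R_{cm}R_{eba}^m − R_{em}R_{cab}^m = 0. -/
open Finset

theorem semisymmetric_identities {ι : Type*} [Fintype ι] [DecidableEq ι]
    (R : ι → ι → ι → ι → ℝ)            -- R a b c d = R_{abc}{}^d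
    (DR : ι → ι → ι → ι → ι → ℝ)        -- DR x a b c d = ∇_x R_{abc}{}^d
    (D2R : ι → ι → ι → ι → ι → ι → ℝ)   -- D2R x y a b c d = ∇_x ∇_y R_{abc}{}^d
    (hAnti : ∀ a b c d, R a b c d = - R b a c d)
    (hDAnti : ∀ x a b c d, DR x a b c d = - DR x b a c d)
    (hD2Anti : ∀ x y a b c d, D2R x y a b c d = - D2R x y b a c d)
    (hB1 : ∀ a b c d, R a b c d + R b c a d + R c a b d = 0)
    (hB2 : ∀ a b c d e, DR a b c d e + DR b c a d e + DR c a b d e = 0)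
    (hDB2 : ∀ x a b c d e,
      D2R x a b c d e + D2R x b c a d e + D2R x c a b d e = 0)
    (hComm : ∀ x y c d e f,
      D2R x y c d e f - D2R y x c d e f =
        - (∑ k, R x y c k * R k d e f) - (∑ k, R x y d k * R c k e f)
        - (∑ k, R x y e k * R c d k f) + (∑ k, R x y k f * R c d e k))
    (g ginv : ι → ι → ℝ)
    (hg : ∀ a b, g a b = g b a)
    (hginvsym : ∀ a b, ginv a b = ginv b a)
    (hginv : ∀ a b, (∑ m, ginv a m * g m b) = if a = b then (1:ℝ) else 0)
    (hPair : ∀ a b c d, (∑ e, R a b c e * g e d) = ∑ e, R c d a e * g e b)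
    (hSS : ∀ x y a b c d, D2R x y a b c d = D2R y x a b c d) :
    (∀ a b c d e f,
      (∑ m, (R a b c m * R d m e f + R b c d m * R a m e f
             + R c d a m * R b m e f + R d a b m * R c m e f))
      - (∑ m, R a c e m * R b d m f) + (∑ m, R a c m f * R b d e m) = 0)
    ∧ (∀ a b c e,
      (∑ m, (∑ k, R a k m k) * R b c e m) + (∑ m, (∑ k, R b k m k) * R c a e m)
      + (∑ m, (∑ k, R c k m k) * R a b e m) = 0)
    ∧ (∀ a b c e,
      (∑ m, (∑ k, R a k m k) * R b e c m) - (∑ m, (∑ k, R b k m k) * R a c e m)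
      + (∑ m, (∑ k, R c k m k) * R e b a m) - (∑ m, (∑ k, R e k m k) * R c a b m) = 0) := by
  -- The semisymmetry quadratic identity T = 0
  have hT : ∀ x y c d e f,
      (∑ k, R x y c k * R k d e f) + (∑ k, R x y d k * R c k e f)
      + (∑ k, R x y e k * R c d k f) - (∑ k, R x y k f * R c d e k) = 0 := by
    intro x y c d e f
    linear_combination hComm x y c d e f - hSS x y c d e f
  -- contracted version: Ricci identity (*)
  have hStar : ∀ x y c e,
      (∑ m, R x y c m * (∑ k, R m k e k)) + (∑ m, (∑ k, R c k m k) * R x y e m) = 0 := by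
    intro x y c e
    have h : (∑ d, ((∑ k, R x y c k * R k d e d) + (∑ k, R x y d k * R c k e d)
        + (∑ k, R x y e k * R c d k d) - (∑ k, R x y k d * R c d e k))) = 0 :=
      Finset.sum_eq_zero fun d _ => hT x y c d e d
    simp only [Finset.sum_add_distrib, Finset.sum_sub_distrib] at h
    have h1 : (∑ d, ∑ k, R x y c k * R k d e d) = ∑ m, R x y c m * (∑ k, R m k e k) := by
      rw [Finset.sum_comm]
      exact Finset.sum_congr rfl fun m _ => (Finset.mul_sum _ _ _).symm
    have h3 : (∑ d, ∑ k, R x y e k * R c d k d) = ∑ m, (∑ k, R c k m k) * R x y e m := by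
      rw [Finset.sum_comm]
      refine Finset.sum_congr rfl fun m _ => ?_
      rw [← Finset.mul_sum]
      ring
    have h24 : (∑ d, ∑ k, R x y d k * R c k e d) = (∑ d, ∑ k, R x y k d * R c d e k) :=
      Finset.sum_comm
    linear_combination h - h24 - h1 - h3
  -- part (ii)
  have part2 : ∀ a b c e,
      (∑ m, (∑ k, R a k m k) * R b c e m) + (∑ m, (∑ k, R b k m k) * R c a e m)
      + (∑ m, (∑ k, R c k m k) * R a b e m) = 0 := by
    intro a b c e
    have s1 := hStar b c a e
    have s2 := hStar c a b e
    have s3 := hStar a b c e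
    have hb : (∑ m, R b c a m * (∑ k, R m k e k)) + (∑ m, R c a b m * (∑ k, R m k e k))
        + (∑ m, R a b c m * (∑ k, R m k e k)) = 0 := by
      rw [← Finset.sum_add_distrib, ← Finset.sum_add_distrib]
      exact Finset.sum_eq_zero fun m _ => by
        linear_combination (∑ k, R m k e k) * hB1 b c a m
    linear_combination s1 + s2 + s3 - hb
  refine ⟨?_, part2, ?_⟩
  · -- part (i)
    intro a b c d e f
    have hT1 := hT a b c d e f
    have hT2 := hT c d a b e f
    have hT3 := hT b d a c e f
    have key : (∑ m, (R a b c m * R d m e f + R b c d m * R a m e f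
        + R c d a m * R b m e f + R d a b m * R c m e f
        - R a c e m * R b d m f + R a c m f * R b d e m
        + (R a b c m * R m d e f + R a b d m * R c m e f
           + R a b e m * R c d m f - R a b m f * R c d e m)
        + (R c d a m * R m b e f + R c d b m * R a m e f
           + R c d e m * R a b m f - R c d m f * R a b e m)
        - (R b d a m * R m c e f + R b d c m * R a m e f
           + R b d e m * R a c m f - R b d m f * R a c e m))) = 0 := by
      refine Finset.sum_eq_zero fun m _ => ?_
      linear_combination (R a b c m) * hAnti m d e f + (R c d a m) * hAnti m b e f
        + (R a m e f) * hB1 b c d m - (R a m e f) * hAnti d b c m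
        + (R c m e f) * hB1 d a b m - (R b d a m) * hAnti m c e f
    simp only [Finset.sum_add_distrib, Finset.sum_sub_distrib] at key ⊢
    linear_combination key - hT1 - hT2 + hT3
  · -- part (iii)
    intro a b c e
    have hswap : ∀ p q r s, (∑ m, (∑ k, R p k m k) * R q r s m)
        + (∑ m, (∑ k, R p k m k) * R r q s m) = 0 := by
      intro p q r s
      rw [← Finset.sum_add_distrib]
      exact Finset.sum_eq_zero fun m _ => by
        linear_combination (∑ k, R p k m k) * hAnti q r s m
    have hbia : ∀ p q r s, (∑ m, (∑ k, R p k m k) * R q r s m)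
        + (∑ m, (∑ k, R p k m k) * R r s q m)
        + (∑ m, (∑ k, R p k m k) * R s q r m) = 0 := by
      intro p q r s
      rw [← Finset.sum_add_distrib, ← Finset.sum_add_distrib]
      exact Finset.sum_eq_zero fun m _ => by
        linear_combination (∑ k, R p k m k) * hB1 q r s m
    have r1 := hbia a b e c
    have r2 := hswap a e c b
    have r3 := hswap a c b e
    have I2a := part2 a b c e
    have r4 := hswap b c a e
    have I2b := part2 c e a b
    have r5 := hswap e a c b
    have r6 := hbia c e a b
    have r7 := hswap c e b a
    linear_combination r1 - r2 - r3 + I2a - r4 + I2b - r5 - r6 + r7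
end

section
/- In a pseudosymmetric manifold in the sense of Deszcz, i.e. [∇_a,∇_b] R_{cdef} = L_R Q(g,R)_{cdefab} with Q the Tachibana tensor, the identities R_{am}R_{bce}^m + R_{bm}R_{cae}^m + R_{cm}R_{abe}^m = 0 and R_{am}R_{bec}^m − R_{bm}R_{ace}^m + R_{cm}R_{eba}^m − R_{em}R_{cab}^m = 0 hold. -/
open Finset

noncomputable def ric {ι : Type*} [Fintype ι] (R : ι → ι → ι → ι → ℝ) (a m : ι) : ℝ :=
  ∑ k, R a k m k

noncomputable def aa {ι : Type*} [Fintype ι] (R : ι → ι → ι → ι → ℝ) (p q r s : ι) : ℝ :=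
  ∑ m, ric R p m * R q r s m

theorem pseudosymmetric_identities {ι : Type*} [Fintype ι] [DecidableEq ι]
    (R : ι → ι → ι → ι → ℝ)            -- R a b c d = R_{abc}{}^d
    (DR : ι → ι → ι → ι → ι → ℝ)        -- DR x a b c d = ∇_x R_{abc}{}^d
    (D2R : ι → ι → ι → ι → ι → ι → ℝ)   -- D2R x y a b c d = ∇_x ∇_y R_{abc}{}^d
    (hAnti : ∀ a b c d, R a b c d = - R b a c d)
    (hDAnti : ∀ x a b c d, DR x a b c d = - DR x b a c d)
    (hD2Anti : ∀ x y a b c d, D2R x y a b c d = - D2R x y b a c d)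
    (hB1 : ∀ a b c d, R a b c d + R b c a d + R c a b d = 0)
    (hB2 : ∀ a b c d e, DR a b c d e + DR b c a d e + DR c a b d e = 0)
    (hDB2 : ∀ x a b c d e,
      D2R x a b c d e + D2R x b c a d e + D2R x c a b d e = 0)
    (hComm : ∀ x y c d e f,
      D2R x y c d e f - D2R y x c d e f =
        - (∑ k, R x y c k * R k d e f) - (∑ k, R x y d k * R c k e f)
        - (∑ k, R x y e k * R c d k f) + (∑ k, R x y k f * R c d e k))
    (g ginv : ι → ι → ℝ)
    (hg : ∀ a b, g a b = g b a)
    (hginvsym : ∀ a b, ginv a b = ginv b a)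
    (hginv : ∀ a b, (∑ m, ginv a m * g m b) = if a = b then (1:ℝ) else 0)
    (hPair : ∀ a b c d, (∑ e, R a b c e * g e d) = ∑ e, R c d a e * g e b)
    (L : ℝ)
    (Rl : ι → ι → ι → ι → ℝ)
    (hRl : ∀ a b c d, Rl a b c d = ∑ e, R a b c e * g e d)
    (D2Rl : ι → ι → ι → ι → ι → ι → ℝ)
    (hD2Rl : ∀ x y a b c d, D2Rl x y a b c d = ∑ e, D2R x y a b c e * g e d)
    (hPS : ∀ a b c d e f,
      D2Rl a b c d e f - D2Rl b a c d e f
      = L * (- (g c b * Rl a d e f) + g c a * Rl b d e f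
             - g d b * Rl c a e f + g d a * Rl c b e f
             - g e b * Rl c d a f + g e a * Rl c d b f
             - g f b * Rl c d e a + g f a * Rl c d e b))
    :
    (∀ a b c e,
      (∑ m, (∑ k, R a k m k) * R b c e m) + (∑ m, (∑ k, R b k m k) * R c a e m)
      + (∑ m, (∑ k, R c k m k) * R a b e m) = 0)
    ∧ (∀ a b c e,
      (∑ m, (∑ k, R a k m k) * R b e c m) - (∑ m, (∑ k, R b k m k) * R a c e m)
      + (∑ m, (∑ k, R c k m k) * R e b a m) - (∑ m, (∑ k, R e k m k) * R c a b m) = 0) := by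
  -- abbreviate
  -- basic delta lemmas
  have hginvA : ∀ e d, (∑ m, g e m * ginv m d) = if d = e then (1:ℝ) else 0 := by
    intro e d
    calc (∑ m, g e m * ginv m d) = ∑ m, ginv d m * g m e := by
          refine Finset.sum_congr rfl fun m _ => ?_
          rw [hg e m, hginvsym m d]; ring
      _ = _ := hginv d e
  have hginvB : ∀ y c, (∑ m, g m y * ginv m c) = if c = y then (1:ℝ) else 0 := by
    intro y c
    calc (∑ m, g m y * ginv m c) = ∑ m, ginv c m * g m y := by
          refine Finset.sum_congr rfl fun m _ => ?_
          rw [hginvsym m c]; ring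
      _ = _ := hginv c y
  have hRaiseAux : ∀ (T : ι → ℝ) (d : ι), (∑ m, (∑ e, T e * g e m) * ginv m d) = T d := by
    intro T d
    calc (∑ m, (∑ e, T e * g e m) * ginv m d)
        = ∑ m, ∑ e, T e * (g e m * ginv m d) := by
          refine Finset.sum_congr rfl fun m _ => ?_
          rw [Finset.sum_mul]; exact Finset.sum_congr rfl fun e _ => by ring
      _ = ∑ e, ∑ m, T e * (g e m * ginv m d) := Finset.sum_comm
      _ = ∑ e, T e * ∑ m, g e m * ginv m d := by
          refine Finset.sum_congr rfl fun e _ => ?_; rw [Finset.mul_sum]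
      _ = ∑ e, T e * (if d = e then (1:ℝ) else 0) := by
          refine Finset.sum_congr rfl fun e _ => ?_
          rw [hginvA e d]
      _ = T d := by simp
  have hRaise : ∀ a b c d, (∑ m, Rl a b c m * ginv m d) = R a b c d := by
    intro a b c d
    calc (∑ m, Rl a b c m * ginv m d)
        = ∑ m, (∑ e, R a b c e * g e m) * ginv m d := by
          refine Finset.sum_congr rfl fun m _ => ?_; rw [hRl]
      _ = R a b c d := hRaiseAux (fun e => R a b c e) d
  have hRaiseD2 : ∀ x y a b c d, (∑ m, D2Rl x y a b c m * ginv m d) = D2R x y a b c d := by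
    intro x y a b c d
    calc (∑ m, D2Rl x y a b c m * ginv m d)
        = ∑ m, (∑ e, D2R x y a b c e * g e m) * ginv m d := by
          refine Finset.sum_congr rfl fun m _ => ?_; rw [hD2Rl]
      _ = D2R x y a b c d := hRaiseAux (fun e => D2R x y a b c e) d
  have hRlPair : ∀ a b c d, Rl a b c d = Rl c d a b := by
    intro a b c d; rw [hRl, hRl]; exact hPair a b c d
  -- Ricci symmetry
  have hRicSym : ∀ a b, ric R a b = ric R b a := by
    intro a b
    calc ric R a b = ∑ k, R a k b k := rfl
      _ = ∑ k, ∑ m, Rl a k b m * ginv m k := by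
          refine Finset.sum_congr rfl fun k _ => (hRaise a k b k).symm
      _ = ∑ k, ∑ m, Rl b m a k * ginv m k := by
          refine Finset.sum_congr rfl fun k _ => Finset.sum_congr rfl fun m _ => ?_
          rw [hRlPair a k b m]
      _ = ∑ m, ∑ k, Rl b m a k * ginv m k := Finset.sum_comm
      _ = ∑ m, ∑ k, Rl b m a k * ginv k m := by
          refine Finset.sum_congr rfl fun m _ => Finset.sum_congr rfl fun k _ => ?_
          rw [hginvsym m k]
      _ = ∑ m, R b m a m := by
          refine Finset.sum_congr rfl fun m _ => hRaise b m a m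
      _ = ric R b a := rfl
  -- trace lemma: sum over first index against upper index
  have hTr : ∀ k e, (∑ c, R c k e c) = -(ric R k e) := by
    intro k e
    calc (∑ c, R c k e c) = ∑ c, -(R k c e c) := by
          refine Finset.sum_congr rfl fun c _ => hAnti c k e c
      _ = -∑ c, R k c e c := by rw [Finset.sum_neg_distrib]
      _ = -(ric R k e) := rfl
  -- contracted commutator identity
  have hCommC : ∀ x y d e, (∑ c, (D2R x y c d e c - D2R y x c d e c))
      = (∑ k, R x y d k * ric R k e) + (∑ k, R x y e k * ric R d k) := by
    intro x y d e
    have step : (∑ c, (D2R x y c d e c - D2R y x c d e c))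
        = ∑ c, (- (∑ k, R x y c k * R k d e c) - (∑ k, R x y d k * R c k e c)
          - (∑ k, R x y e k * R c d k c) + (∑ k, R x y k c * R c d e k)) := by
      refine Finset.sum_congr rfl fun c _ => hComm x y c d e c
    rw [step]
    have split : ∑ c, (- (∑ k, R x y c k * R k d e c) - (∑ k, R x y d k * R c k e c)
          - (∑ k, R x y e k * R c d k c) + (∑ k, R x y k c * R c d e k))
        = -(∑ c, ∑ k, R x y c k * R k d e c) - (∑ c, ∑ k, R x y d k * R c k e c)
          - (∑ c, ∑ k, R x y e k * R c d k c) + (∑ c, ∑ k, R x y k c * R c d e k) := by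
      rw [Finset.sum_add_distrib, Finset.sum_sub_distrib, Finset.sum_sub_distrib,
        Finset.sum_neg_distrib]
    rw [split]
    have h14 : (∑ c, ∑ k, R x y k c * R c d e k) = ∑ c, ∑ k, R x y c k * R k d e c :=
      Finset.sum_comm
    have h2 : (∑ c, ∑ k, R x y d k * R c k e c) = -(∑ k, R x y d k * ric R k e) := by
      rw [Finset.sum_comm]
      calc (∑ k, ∑ c, R x y d k * R c k e c)
          = ∑ k, R x y d k * ∑ c, R c k e c := by
            refine Finset.sum_congr rfl fun k _ => (Finset.mul_sum _ _ _).symm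
        _ = ∑ k, R x y d k * (-(ric R k e)) := by
            refine Finset.sum_congr rfl fun k _ => by rw [hTr k e]
        _ = -(∑ k, R x y d k * ric R k e) := by
            rw [← Finset.sum_neg_distrib]
            exact Finset.sum_congr rfl fun k _ => by ring
    have h3 : (∑ c, ∑ k, R x y e k * R c d k c) = -(∑ k, R x y e k * ric R d k) := by
      rw [Finset.sum_comm]
      calc (∑ k, ∑ c, R x y e k * R c d k c)
          = ∑ k, R x y e k * ∑ c, R c d k c := by
            refine Finset.sum_congr rfl fun k _ => (Finset.mul_sum _ _ _).symm
        _ = ∑ k, R x y e k * (-(ric R d k)) := by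
            refine Finset.sum_congr rfl fun k _ => by rw [hTr d k]
        _ = -(∑ k, R x y e k * ric R d k) := by
            rw [← Finset.sum_neg_distrib]
            exact Finset.sum_congr rfl fun k _ => by ring
    rw [h14, h2, h3]; ring
  -- contracted pseudosymmetry identity
  have hPSC : ∀ x y d e, (∑ c, (D2R x y c d e c - D2R y x c d e c))
      = L * (g d y * ric R x e - g d x * ric R y e + g e y * ric R d x - g e x * ric R d y) := by
    intro x y d e
    have step1 : ∀ c, D2R x y c d e c - D2R y x c d e c
        = ∑ m, (D2Rl x y c d e m - D2Rl y x c d e m) * ginv m c := by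
      intro c
      rw [← hRaiseD2 x y c d e c, ← hRaiseD2 y x c d e c, ← Finset.sum_sub_distrib]
      exact Finset.sum_congr rfl fun m _ => by ring
    have step2 : ∀ c, D2R x y c d e c - D2R y x c d e c
        = ∑ m, (L * (- (g c y * Rl x d e m) + g c x * Rl y d e m
             - g d y * Rl c x e m + g d x * Rl c y e m
             - g e y * Rl c d x m + g e x * Rl c d y m
             - g m y * Rl c d e x + g m x * Rl c d e y)) * ginv m c := by
      intro c
      rw [step1 c]
      exact Finset.sum_congr rfl fun m _ => by rw [hPS x y c d e m]
    have step3 : (∑ c, (D2R x y c d e c - D2R y x c d e c))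
        = L * (-(∑ c, ∑ m, (g c y * Rl x d e m) * ginv m c)
            + (∑ c, ∑ m, (g c x * Rl y d e m) * ginv m c)
            - (∑ c, ∑ m, (g d y * Rl c x e m) * ginv m c)
            + (∑ c, ∑ m, (g d x * Rl c y e m) * ginv m c)
            - (∑ c, ∑ m, (g e y * Rl c d x m) * ginv m c)
            + (∑ c, ∑ m, (g e x * Rl c d y m) * ginv m c)
            - (∑ c, ∑ m, (g m y * Rl c d e x) * ginv m c)
            + (∑ c, ∑ m, (g m x * Rl c d e y) * ginv m c)) := by
      rw [Finset.sum_congr rfl fun c _ => step2 c]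
      simp only [mul_add, mul_sub, mul_neg, add_mul, sub_mul, neg_mul,
        Finset.sum_add_distrib, Finset.sum_sub_distrib, Finset.sum_neg_distrib,
        Finset.mul_sum]
      ring
    -- evaluate the eight double sums
    have T1 : (∑ c, ∑ m, (g c y * Rl x d e m) * ginv m c) = Rl x d e y := by
      calc (∑ c, ∑ m, (g c y * Rl x d e m) * ginv m c)
          = ∑ m, ∑ c, (g c y * Rl x d e m) * ginv m c := Finset.sum_comm
        _ = ∑ m, Rl x d e m * ∑ c, g c y * ginv c m := by
            refine Finset.sum_congr rfl fun m _ => ?_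
            rw [Finset.mul_sum]
            exact Finset.sum_congr rfl fun c _ => by rw [hginvsym m c]; ring
        _ = ∑ m, Rl x d e m * (if m = y then (1:ℝ) else 0) := by
            refine Finset.sum_congr rfl fun m _ => by rw [hginvB y m]
        _ = Rl x d e y := by simp
    have T2 : (∑ c, ∑ m, (g c x * Rl y d e m) * ginv m c) = Rl y d e x := by
      calc (∑ c, ∑ m, (g c x * Rl y d e m) * ginv m c)
          = ∑ m, ∑ c, (g c x * Rl y d e m) * ginv m c := Finset.sum_comm
        _ = ∑ m, Rl y d e m * ∑ c, g c x * ginv c m := by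
            refine Finset.sum_congr rfl fun m _ => ?_
            rw [Finset.mul_sum]
            exact Finset.sum_congr rfl fun c _ => by rw [hginvsym m c]; ring
        _ = ∑ m, Rl y d e m * (if m = x then (1:ℝ) else 0) := by
            refine Finset.sum_congr rfl fun m _ => by rw [hginvB x m]
        _ = Rl y d e x := by simp
    have Tmid : ∀ p q, (∑ c, ∑ m, Rl c p q m * ginv m c) = -(ric R p q) := by
      intro p q
      calc (∑ c, ∑ m, Rl c p q m * ginv m c)
          = ∑ c, R c p q c := by
            refine Finset.sum_congr rfl fun c _ => hRaise c p q c
        _ = -(ric R p q) := hTr p q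
    have T3 : (∑ c, ∑ m, (g d y * Rl c x e m) * ginv m c) = g d y * (-(ric R x e)) := by
      rw [← Tmid x e, Finset.mul_sum]
      exact Finset.sum_congr rfl fun c _ => by rw [Finset.mul_sum]; exact Finset.sum_congr rfl fun m _ => by ring
    have T4 : (∑ c, ∑ m, (g d x * Rl c y e m) * ginv m c) = g d x * (-(ric R y e)) := by
      rw [← Tmid y e, Finset.mul_sum]
      exact Finset.sum_congr rfl fun c _ => by rw [Finset.mul_sum]; exact Finset.sum_congr rfl fun m _ => by ring
    have T5 : (∑ c, ∑ m, (g e y * Rl c d x m) * ginv m c) = g e y * (-(ric R d x)) := by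
      rw [← Tmid d x, Finset.mul_sum]
      exact Finset.sum_congr rfl fun c _ => by rw [Finset.mul_sum]; exact Finset.sum_congr rfl fun m _ => by ring
    have T6 : (∑ c, ∑ m, (g e x * Rl c d y m) * ginv m c) = g e x * (-(ric R d y)) := by
      rw [← Tmid d y, Finset.mul_sum]
      exact Finset.sum_congr rfl fun c _ => by rw [Finset.mul_sum]; exact Finset.sum_congr rfl fun m _ => by ring
    have T7 : (∑ c, ∑ m, (g m y * Rl c d e x) * ginv m c) = Rl y d e x := by
      calc (∑ c, ∑ m, (g m y * Rl c d e x) * ginv m c)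
          = ∑ c, Rl c d e x * ∑ m, g m y * ginv m c := by
            refine Finset.sum_congr rfl fun c _ => ?_
            rw [Finset.mul_sum]
            exact Finset.sum_congr rfl fun m _ => by ring
        _ = ∑ c, Rl c d e x * (if c = y then (1:ℝ) else 0) := by
            refine Finset.sum_congr rfl fun c _ => by rw [hginvB y c]
        _ = Rl y d e x := by simp
    have T8 : (∑ c, ∑ m, (g m x * Rl c d e y) * ginv m c) = Rl x d e y := by
      calc (∑ c, ∑ m, (g m x * Rl c d e y) * ginv m c)
          = ∑ c, Rl c d e y * ∑ m, g m x * ginv m c := by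
            refine Finset.sum_congr rfl fun c _ => ?_
            rw [Finset.mul_sum]
            exact Finset.sum_congr rfl fun m _ => by ring
        _ = ∑ c, Rl c d e y * (if c = x then (1:ℝ) else 0) := by
            refine Finset.sum_congr rfl fun c _ => by rw [hginvB x c]
        _ = Rl x d e y := by simp
    rw [step3, T1, T2, T3, T4, T5, T6, T7, T8]; ring
  -- the key "star" identity
  have hstar : ∀ x y d e, aa R e x y d + aa R d x y e
      = L * (g d y * ric R x e - g d x * ric R y e + g e y * ric R d x - g e x * ric R d y) := by
    intro x y d e
    have h1 : aa R e x y d = ∑ k, R x y d k * ric R k e := by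
      unfold aa
      exact Finset.sum_congr rfl fun m _ => by rw [hRicSym e m]; ring
    have h2 : aa R d x y e = ∑ k, R x y e k * ric R d k := by
      unfold aa
      exact Finset.sum_congr rfl fun m _ => by ring
    rw [h1, h2, ← hCommC x y d e, hPSC x y d e]
  -- antisymmetry and Bianchi for aa
  have hAs : ∀ p q r s, aa R p q r s + aa R p r q s = 0 := by
    intro p q r s
    unfold aa
    rw [← Finset.sum_add_distrib]
    refine Finset.sum_eq_zero fun m _ => ?_
    rw [hAnti q r s m]; ring
  have hBi : ∀ p q r s, aa R p q r s + aa R p r s q + aa R p s q r = 0 := by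
    intro p q r s
    unfold aa
    rw [← Finset.sum_add_distrib, ← Finset.sum_add_distrib]
    refine Finset.sum_eq_zero fun m _ => ?_
    linear_combination (ric R p m) * (hB1 q r s m)
  constructor
  · intro a b c e
    have key : aa R a b c e + aa R b c a e + aa R c a b e = 0 := by
      linear_combination (hstar a b c e) - (hstar a c b e) + (hstar b c a e)
        + (hAs b a c e) - (hBi e a b c) + (hAs e a c b)
        - (L * ric R c e) * (hg a b) + (L * ric R b e) * (hg a c)
        - (L * ric R b c) * (hg a e) + (L * g a e) * (hRicSym b c)
        + (L * ric R c b) * (hg a e) - (L * ric R a e) * (hg b c)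
        + (L * ric R a c) * (hg b e) - (L * g b e) * (hRicSym a c)
        - (L * ric R c a) * (hg b e) - (L * ric R a b) * (hg c e)
        + (L * g c e) * (hRicSym a b) + (L * ric R b a) * (hg c e)
    simpa [aa, ric] using key
  · intro a b c e
    have key : aa R a b e c - aa R b a c e + aa R c e b a - aa R e c a b = 0 := by
      linear_combination (hstar a b c e) - (hstar a e b c) + (hstar b c a e) + (hstar c e a b)
        - (hBi a b c e) + (hAs a b e c) - (hBi b a c e) + (hAs b a e c)
        - (hAs c a b e) + (hBi c a e b) - (hBi e a b c)
        - (L * g a b) * (hRicSym c e) - (L * ric R e c) * (hg a b)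
        + (L * g a c) * (hRicSym b e) + (L * ric R c b) * (hg a e)
        - (L * ric R a e) * (hg b c) + (L * ric R a c) * (hg b e)
        - (L * g b e) * (hRicSym a c) - (L * ric R c a) * (hg b e)
        - (L * ric R a b) * (hg c e) + (L * g c e) * (hRicSym a b)
    simpa [aa, ric] using key
end

section
/- In a generalized recurrent Riemannian manifold, i.e. ∇_a R_{bcd}^e = λ_a R_{bcd}^e + μ_a(δ_b^e g_{cd} − δ_c^e g_{bd}) with covectors λ, μ, if the scalar curvature R ≠ 0 is constant, then λ and μ are proportional and either λ is closed or the manifold has constant curvature R_{abcd} = (R/(n(n−1)))(g_{bd}g_{ac} − g_{ad}g_{bc}). -/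
open Finset
private lemma sum_comm4 {ι : Type*} [Fintype ι] (T : ι → ι → ι → ι → ℝ) :
    (∑ a, ∑ b, ∑ c, ∑ d, T a b c d) = ∑ c, ∑ d, ∑ a, ∑ b, T a b c d := by
  calc (∑ a, ∑ b, ∑ c, ∑ d, T a b c d)
      = ∑ a, ∑ c, ∑ b, ∑ d, T a b c d :=
        Finset.sum_congr rfl fun a _ => Finset.sum_comm
    _ = ∑ c, ∑ a, ∑ b, ∑ d, T a b c d := Finset.sum_comm
    _ = ∑ c, ∑ a, ∑ d, ∑ b, T a b c d :=
        Finset.sum_congr rfl fun c _ => Finset.sum_congr rfl fun a _ => Finset.sum_comm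
    _ = ∑ c, ∑ d, ∑ a, ∑ b, T a b c d :=
        Finset.sum_congr rfl fun c _ => Finset.sum_comm

private def Rlow {ι : Type*} [Fintype ι] (R : ι → ι → ι → ι → ℝ) (g : ι → ι → ℝ) (a b c d : ι) : ℝ :=
  ∑ e, R a b c e * g e d

private def Brk {ι : Type*} [Fintype ι] (R : ι → ι → ι → ι → ℝ) (g : ι → ι → ℝ) (p q r s t u : ι) : ℝ :=
  ∑ k, ∑ m, R p q r k * R s t u m * g k m

private lemma sum_lower {ι : Type*} [Fintype ι] (P : ι → ℝ) (Q : ι → ι → ℝ) (g : ι → ι → ℝ) (f : ι) :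
    (∑ m, (∑ k, P k * Q k m) * g m f) = ∑ k, P k * (∑ m, Q k m * g m f) := by
  calc (∑ m, (∑ k, P k * Q k m) * g m f)
      = ∑ m, ∑ k, P k * (Q k m * g m f) := Finset.sum_congr rfl fun m _ => by
        rw [Finset.sum_mul]; exact Finset.sum_congr rfl fun k _ => by ring
    _ = ∑ k, ∑ m, P k * (Q k m * g m f) := Finset.sum_comm
    _ = ∑ k, P k * (∑ m, Q k m * g m f) := Finset.sum_congr rfl fun k _ => by
        rw [Finset.mul_sum]

private lemma toBr {ι : Type*} [Fintype ι] (P Q : ι → ℝ) (g : ι → ι → ℝ) (hg : ∀ a b, g a b = g b a) :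
    (∑ k, P k * (∑ m, Q m * g m k)) = ∑ k, ∑ m, P k * Q m * g k m := by
  refine Finset.sum_congr rfl fun k _ => ?_
  rw [Finset.mul_sum]
  exact Finset.sum_congr rfl fun m _ => by rw [hg m k]; ring

private lemma sum2_lin {ι : Type*} [Fintype ι] (a b : ℝ) (F G : ι → ι → ℝ) :
    (∑ p, ∑ q, (a * F p q + b * G p q)) = a * (∑ p, ∑ q, F p q) + b * (∑ p, ∑ q, G p q) := by
  rw [Finset.mul_sum, Finset.mul_sum, ← Finset.sum_add_distrib]
  refine Finset.sum_congr rfl fun p _ => ?_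
  rw [Finset.mul_sum, Finset.mul_sum, ← Finset.sum_add_distrib]

private lemma dsum1 {ι : Type*} [Fintype ι] [DecidableEq ι] (c : ι) (F : ι → ℝ) :
    (∑ b, (if c = b then (1:ℝ) else 0) * F b) = F c := by simp

theorem generalized_recurrent_constant_scalar {ι : Type*} [Fintype ι] [DecidableEq ι]
    (R : ι → ι → ι → ι → ℝ)            -- R a b c d = R_{abc}{}^d
    (DR : ι → ι → ι → ι → ι → ℝ)        -- DR x a b c d = ∇_x R_{abc}{}^d
    (D2R : ι → ι → ι → ι → ι → ι → ℝ)   -- D2R x y a b c d = ∇_x ∇_y R_{abc}{}^d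
    (hAnti : ∀ a b c d, R a b c d = - R b a c d)
    (hDAnti : ∀ x a b c d, DR x a b c d = - DR x b a c d)
    (hD2Anti : ∀ x y a b c d, D2R x y a b c d = - D2R x y b a c d)
    (hB1 : ∀ a b c d, R a b c d + R b c a d + R c a b d = 0)
    (hB2 : ∀ a b c d e, DR a b c d e + DR b c a d e + DR c a b d e = 0)
    (hDB2 : ∀ x a b c d e,
      D2R x a b c d e + D2R x b c a d e + D2R x c a b d e = 0)
    (hComm : ∀ x y c d e f,
      D2R x y c d e f - D2R y x c d e f =
        - (∑ k, R x y c k * R k d e f) - (∑ k, R x y d k * R c k e f)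
        - (∑ k, R x y e k * R c d k f) + (∑ k, R x y k f * R c d e k))
    (g ginv : ι → ι → ℝ)
    (hg : ∀ a b, g a b = g b a)
    (hginvsym : ∀ a b, ginv a b = ginv b a)
    (hginv : ∀ a b, (∑ m, ginv a m * g m b) = if a = b then (1:ℝ) else 0)
    (hPair : ∀ a b c d, (∑ e, R a b c e * g e d) = ∑ e, R c d a e * g e b)
    (lam mu : ι → ℝ) (Dlam Dmu : ι → ι → ℝ)
    (hGR : ∀ a b c d e, DR a b c d e
      = lam a * R b c d e
        + mu a * ((if b = e then (1:ℝ) else 0) * g c d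
                  - (if c = e then (1:ℝ) else 0) * g b d))
    (hGR2 : ∀ x a b c d e, D2R x a b c d e
      = Dlam x a * R b c d e + lam a * DR x b c d e
        + Dmu x a * ((if b = e then (1:ℝ) else 0) * g c d
                     - (if c = e then (1:ℝ) else 0) * g b d))
    (S : ℝ) (hSdef : S = ∑ p, ∑ q, ginv p q * (∑ m, R p m q m))
    (hS0 : S ≠ 0)
    (hconst : ∀ x, (∑ p, ∑ q, ginv p q * (∑ m, DR x p m q m)) = 0) :
    (∃ k : ℝ, ∀ a, mu a = k * lam a)
    ∧ ((∀ a b, Dlam a b = Dlam b a)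
       ∨ (∀ a b c d, (∑ e, R a b c e * g e d)
            = (S / ((Fintype.card ι : ℝ) * ((Fintype.card ι : ℝ) - 1)))
              * (g b d * g a c - g a d * g b c))) := by
  classical
  set n : ℝ := (Fintype.card ι : ℝ) with hn
  have hcard2 : 2 ≤ Fintype.card ι := by
    by_contra hlt
    push_neg at hlt
    have hsub : ∀ a b : ι, a = b := by
      intro a b
      have h1 : Fintype.card ι ≤ 1 := by omega
      exact Fintype.card_le_one_iff.mp h1 a b
    have hR0 : ∀ a b c d, R a b c d = 0 := by
      intro a b c d
      have h2 := hAnti a b c d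
      rw [hsub b a] at h2
      rw [hsub b a]
      linarith
    apply hS0
    rw [hSdef]
    simp [hR0]
  have hn2 : (2:ℝ) ≤ n := by rw [hn]; exact_mod_cast hcard2
  have hn0 : n ≠ 0 := by intro h; rw [h] at hn2; linarith
  have hn1 : n - 1 ≠ 0 := by intro h; have : n = 1 := by linarith
                             rw [this] at hn2; linarith
  set c0 : ℝ := S / (n * (n - 1)) with hc0
  -- trace of metric
  have htr : (∑ c, ∑ d, ginv c d * g c d) = n := by
    have h1 : ∀ c : ι, (∑ d, ginv c d * g c d) = (if c = c then (1:ℝ) else 0) := by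
      intro c
      rw [← hginv c c]
      exact Finset.sum_congr rfl fun d _ => by rw [hg c d]
    calc (∑ c, ∑ d, ginv c d * g c d) = ∑ _c : ι, (1:ℝ) := by
          refine Finset.sum_congr rfl fun c _ => ?_
          rw [h1 c]; simp
      _ = n := by simp [hn]
  -- mu = c0 * lam
  have hmu : ∀ x, mu x = c0 * lam x := by
    intro x
    have h0 := hconst x
    have h1 : (∑ p, ∑ q, ginv p q * (∑ m, DR x p m q m))
        = lam x * S + mu x * ((1 - n) * n) := by
      have h2 : ∀ p q : ι, (∑ m, DR x p m q m)
          = lam x * (∑ m, R p m q m) + mu x * ((1 - n) * g p q) := by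
        intro p q
        calc (∑ m, DR x p m q m)
            = ∑ m, (lam x * R p m q m
                + mu x * ((if p = m then (1:ℝ) else 0) * g m q - g p q)) :=
              Finset.sum_congr rfl fun m _ => by rw [hGR]; simp
          _ = lam x * (∑ m, R p m q m)
              + mu x * ((∑ m, (if p = m then (1:ℝ) else 0) * g m q) - ∑ _m : ι, g p q) := by
              rw [Finset.sum_add_distrib, ← Finset.mul_sum, ← Finset.mul_sum,
                Finset.sum_sub_distrib]
          _ = lam x * (∑ m, R p m q m) + mu x * ((1 - n) * g p q) := by
              rw [dsum1 p (fun m => g m q), Finset.sum_const, Finset.card_univ,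
                nsmul_eq_mul, ← hn]
              ring
      calc (∑ p, ∑ q, ginv p q * (∑ m, DR x p m q m))
          = ∑ p, ∑ q, (lam x * (ginv p q * (∑ m, R p m q m))
              + (mu x * (1 - n)) * (ginv p q * g p q)) := by
            refine Finset.sum_congr rfl fun p _ => Finset.sum_congr rfl fun q _ => ?_
            rw [h2 p q]; ring
        _ = lam x * (∑ p, ∑ q, ginv p q * (∑ m, R p m q m))
            + (mu x * (1 - n)) * (∑ p, ∑ q, ginv p q * g p q) :=
            sum2_lin _ _ _ _
        _ = lam x * S + mu x * ((1 - n) * n) := by rw [← hSdef, htr]; ring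
    rw [h1] at h0
    have hnn : n * (n - 1) ≠ 0 := mul_ne_zero hn0 hn1
    rw [hc0, div_mul_eq_mul_div, eq_div_iff hnn]
    linear_combination -h0
  -- raised commutator identity
  have hCommR : ∀ x y b c d e, D2R x y b c d e - D2R y x b c d e
      = (Dlam x y - Dlam y x) * R b c d e
        + (Dmu x y - Dmu y x) * ((if b = e then (1:ℝ) else 0) * g c d
              - (if c = e then (1:ℝ) else 0) * g b d) := by
    intro x y b c d e
    rw [hGR2 x y b c d e, hGR2 y x b c d e, hGR x b c d e, hGR y b c d e, hmu x, hmu y]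
    ring
  -- lowered curvature symmetries
  have hRlPair : ∀ a b c d, Rlow R g a b c d = Rlow R g c d a b := fun a b c d => hPair a b c d
  have hRlA1 : ∀ a b c d, Rlow R g a b c d = - Rlow R g b a c d := by
    intro a b c d
    show (∑ e, R a b c e * g e d) = -∑ e, R b a c e * g e d
    rw [← Finset.sum_neg_distrib]
    exact Finset.sum_congr rfl fun e _ => by rw [hAnti a b c e]; ring
  have hRlA2 : ∀ a b c d, Rlow R g a b c d = - Rlow R g a b d c := by
    intro a b c d
    rw [hRlPair a b c d, hRlA1 c d a b, hRlPair d c a b]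
  have hgig : ∀ e m, (∑ h, g e h * ginv h m) = if e = m then (1:ℝ) else 0 := by
    intro e m
    have h1 : (∑ h, g e h * ginv h m) = ∑ h, ginv m h * g h e :=
      Finset.sum_congr rfl fun h _ => by rw [hg e h, hginvsym h m]; ring
    rw [h1, hginv m e]
    by_cases hem : e = m
    · simp [hem]
    · simp [hem, Ne.symm hem]
  have hRup : ∀ a b c k, (∑ h, Rlow R g a b c h * ginv h k) = R a b c k := by
    intro a b c k
    show (∑ h, (∑ e, R a b c e * g e h) * ginv h k) = R a b c k
    calc (∑ h, (∑ e, R a b c e * g e h) * ginv h k)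
        = ∑ h, ∑ e, R a b c e * (g e h * ginv h k) := by
          refine Finset.sum_congr rfl fun h _ => ?_
          rw [Finset.sum_mul]
          exact Finset.sum_congr rfl fun e _ => by ring
      _ = ∑ e, ∑ h, R a b c e * (g e h * ginv h k) := Finset.sum_comm
      _ = ∑ e, R a b c e * (if e = k then (1:ℝ) else 0) := by
          refine Finset.sum_congr rfl fun e _ => ?_
          rw [← Finset.mul_sum, hgig e k]
      _ = R a b c k := by simp
  -- Ricci trace lemmas
  have hRicNeg : ∀ c d, (∑ b, R b c d b) = - ∑ m, R c m d m := by
    intro c d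
    rw [← Finset.sum_neg_distrib]
    exact Finset.sum_congr rfl fun b _ => hAnti b c d b
  have hRicRl : ∀ c d, (∑ m, R c m d m) = ∑ m, ∑ h, ginv h m * Rlow R g c m d h := by
    intro c d
    calc (∑ m, R c m d m) = ∑ m, ∑ h, Rlow R g c m d h * ginv h m :=
          Finset.sum_congr rfl fun m _ => (hRup c m d m).symm
      _ = ∑ m, ∑ h, ginv h m * Rlow R g c m d h :=
          Finset.sum_congr rfl fun m _ => Finset.sum_congr rfl fun h _ => by ring
  have hRicSym : ∀ c d, (∑ m, R c m d m) = ∑ m, R d m c m := by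
    intro c d
    rw [hRicRl c d, hRicRl d c]
    calc (∑ m, ∑ h, ginv h m * Rlow R g c m d h)
        = ∑ m, ∑ h, ginv h m * Rlow R g d h c m :=
          Finset.sum_congr rfl fun m _ => Finset.sum_congr rfl fun h _ => by
            rw [hRlPair c m d h]
      _ = ∑ h, ∑ m, ginv h m * Rlow R g d h c m := Finset.sum_comm
      _ = ∑ m, ∑ h, ginv h m * Rlow R g d m c h :=
          Finset.sum_congr rfl fun m _ => Finset.sum_congr rfl fun h _ => by
            rw [hginvsym m h]
  -- (R1): contracted commutator identity
  have hR1 : ∀ x y c d,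
      (Dlam x y - Dlam y x) * (- ∑ m, R c m d m)
        + (Dmu x y - Dmu y x) * ((n - 1) * g c d)
      = (∑ k, R x y c k * (∑ m, R k m d m)) + ∑ k, R x y d k * (∑ m, R c m k m) := by
    intro x y c d
    have hsum : (∑ b, (D2R x y b c d b - D2R y x b c d b))
        = ∑ b, (- (∑ k, R x y b k * R k c d b) - (∑ k, R x y c k * R b k d b)
            - (∑ k, R x y d k * R b c k b) + (∑ k, R x y k b * R b c d k)) :=
      Finset.sum_congr rfl fun b _ => hComm x y b c d b
    have hL : (∑ b, (D2R x y b c d b - D2R y x b c d b))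
        = (Dlam x y - Dlam y x) * (- ∑ m, R c m d m)
          + (Dmu x y - Dmu y x) * ((n - 1) * g c d) := by
      calc (∑ b, (D2R x y b c d b - D2R y x b c d b))
          = ∑ b, ((Dlam x y - Dlam y x) * R b c d b
              + (Dmu x y - Dmu y x) * ((if b = b then (1:ℝ) else 0) * g c d
                  - (if c = b then (1:ℝ) else 0) * g b d)) :=
            Finset.sum_congr rfl fun b _ => hCommR x y b c d b
        _ = ∑ b, ((Dlam x y - Dlam y x) * R b c d b
              + (Dmu x y - Dmu y x) * (g c d - (if c = b then (1:ℝ) else 0) * g b d)) := by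
            refine Finset.sum_congr rfl fun b _ => ?_
            simp
        _ = (Dlam x y - Dlam y x) * (∑ b, R b c d b)
            + (Dmu x y - Dmu y x) * ((∑ _b : ι, g c d)
                - ∑ b, (if c = b then (1:ℝ) else 0) * g b d) := by
            rw [Finset.sum_add_distrib, ← Finset.mul_sum, ← Finset.mul_sum,
              Finset.sum_sub_distrib]
        _ = (Dlam x y - Dlam y x) * (- ∑ m, R c m d m)
            + (Dmu x y - Dmu y x) * ((n - 1) * g c d) := by
            rw [hRicNeg c d, dsum1 c (fun b => g b d), Finset.sum_const, Finset.card_univ,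
              nsmul_eq_mul, ← hn, hg c d]
            ring
    have e14 : (∑ b, ∑ k, R x y k b * R b c d k) = ∑ b, ∑ k, R x y b k * R k c d b :=
      Finset.sum_comm
    have e2 : (∑ b, ∑ k, R x y c k * R b k d b) = - ∑ k, R x y c k * (∑ m, R k m d m) := by
      rw [Finset.sum_comm, ← Finset.sum_neg_distrib]
      refine Finset.sum_congr rfl fun k _ => ?_
      rw [← Finset.mul_sum, hRicNeg k d]
      ring
    have e3 : (∑ b, ∑ k, R x y d k * R b c k b) = - ∑ k, R x y d k * (∑ m, R c m k m) := by
      rw [Finset.sum_comm, ← Finset.sum_neg_distrib]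
      refine Finset.sum_congr rfl fun k _ => ?_
      rw [← Finset.mul_sum, hRicNeg c k]
      ring
    have hsplit : (∑ b, (- (∑ k, R x y b k * R k c d b) - (∑ k, R x y c k * R b k d b)
        - (∑ k, R x y d k * R b c k b) + (∑ k, R x y k b * R b c d k)))
        = - (∑ b, ∑ k, R x y b k * R k c d b) - (∑ b, ∑ k, R x y c k * R b k d b)
          - (∑ b, ∑ k, R x y d k * R b c k b) + (∑ b, ∑ k, R x y k b * R b c d k) := by
      rw [Finset.sum_add_distrib, Finset.sum_sub_distrib, Finset.sum_sub_distrib,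
        Finset.sum_neg_distrib]
    rw [← hL, hsum, hsplit, e14, e2, e3]
    ring
  -- double divergence vanishing : the skew trick
  have hX1 : ∀ x y, (∑ c, ∑ d, ginv c d * (∑ k, R x y c k * (∑ m, R k m d m))) = 0 := by
    intro x y
    have hrw : (∑ c, ∑ d, ginv c d * (∑ k, R x y c k * (∑ m, R k m d m)))
        = ∑ c, ∑ d, ∑ h, ∑ k, ginv c d * ginv h k * Rlow R g x y c h * (∑ m, R k m d m) := by
      refine Finset.sum_congr rfl fun c _ => Finset.sum_congr rfl fun d _ => ?_
      calc ginv c d * (∑ k, R x y c k * (∑ m, R k m d m))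
          = ∑ k, ginv c d * ((∑ h, Rlow R g x y c h * ginv h k) * (∑ m, R k m d m)) := by
            rw [Finset.mul_sum]
            exact Finset.sum_congr rfl fun k _ => by rw [hRup x y c k]
        _ = ∑ k, ∑ h, ginv c d * ginv h k * Rlow R g x y c h * (∑ m, R k m d m) := by
            refine Finset.sum_congr rfl fun k _ => ?_
            rw [Finset.sum_mul, Finset.mul_sum]
            exact Finset.sum_congr rfl fun h _ => by ring
        _ = ∑ h, ∑ k, ginv c d * ginv h k * Rlow R g x y c h * (∑ m, R k m d m) :=
            Finset.sum_comm
    have hsw := sum_comm4 (fun c d h k => ginv c d * ginv h k * Rlow R g x y c h * (∑ m, R k m d m))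
    have hneg : (∑ c, ∑ d, ∑ h, ∑ k, ginv h k * ginv c d * Rlow R g x y h c * (∑ m, R d m k m))
        = - ∑ c, ∑ d, ∑ h, ∑ k, ginv c d * ginv h k * Rlow R g x y c h * (∑ m, R k m d m) := by
      rw [← Finset.sum_neg_distrib]
      refine Finset.sum_congr rfl fun c _ => ?_
      rw [← Finset.sum_neg_distrib]
      refine Finset.sum_congr rfl fun d _ => ?_
      rw [← Finset.sum_neg_distrib]
      refine Finset.sum_congr rfl fun h _ => ?_
      rw [← Finset.sum_neg_distrib]
      refine Finset.sum_congr rfl fun k _ => ?_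
      rw [hRlA2 x y h c, hRicSym d k]
      ring
    rw [hrw]
    have : (∑ c, ∑ d, ∑ h, ∑ k, ginv c d * ginv h k * Rlow R g x y c h * (∑ m, R k m d m))
        = - ∑ c, ∑ d, ∑ h, ∑ k, ginv c d * ginv h k * Rlow R g x y c h * (∑ m, R k m d m) := by
      calc (∑ c, ∑ d, ∑ h, ∑ k, ginv c d * ginv h k * Rlow R g x y c h * (∑ m, R k m d m))
          = ∑ c, ∑ d, ∑ h, ∑ k, ginv h k * ginv c d * Rlow R g x y h c * (∑ m, R d m k m) :=
            hsw
        _ = - ∑ c, ∑ d, ∑ h, ∑ k, ginv c d * ginv h k * Rlow R g x y c h * (∑ m, R k m d m) :=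
            hneg
    linarith
  have hX2 : ∀ x y, (∑ c, ∑ d, ginv c d * (∑ k, R x y d k * (∑ m, R c m k m))) = 0 := by
    intro x y
    have h1 : (∑ c, ∑ d, ginv c d * (∑ k, R x y d k * (∑ m, R c m k m)))
        = ∑ c, ∑ d, ginv c d * (∑ k, R x y c k * (∑ m, R k m d m)) := by
      rw [Finset.sum_comm]
      refine Finset.sum_congr rfl fun c _ => Finset.sum_congr rfl fun d _ => ?_
      rw [hginvsym d c]
      congr 1
      exact Finset.sum_congr rfl fun k _ => by rw [hRicSym d k]
    rw [h1, hX1 x y]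
  -- B = c0 * A
  have hBA : ∀ x y, Dmu x y - Dmu y x = c0 * (Dlam x y - Dlam y x) := by
    intro x y
    have hcon : (∑ c, ∑ d, ginv c d * ((Dlam x y - Dlam y x) * (- ∑ m, R c m d m)
          + (Dmu x y - Dmu y x) * ((n - 1) * g c d)))
        = ∑ c, ∑ d, ginv c d * ((∑ k, R x y c k * (∑ m, R k m d m))
            + ∑ k, R x y d k * (∑ m, R c m k m)) :=
      Finset.sum_congr rfl fun c _ => Finset.sum_congr rfl fun d _ => by rw [hR1 x y c d]
    have hLc : (∑ c, ∑ d, ginv c d * ((Dlam x y - Dlam y x) * (- ∑ m, R c m d m)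
          + (Dmu x y - Dmu y x) * ((n - 1) * g c d)))
        = - (Dlam x y - Dlam y x) * S + (Dmu x y - Dmu y x) * ((n - 1) * n) := by
      calc (∑ c, ∑ d, ginv c d * ((Dlam x y - Dlam y x) * (- ∑ m, R c m d m)
            + (Dmu x y - Dmu y x) * ((n - 1) * g c d)))
          = ∑ c, ∑ d, ((- (Dlam x y - Dlam y x)) * (ginv c d * (∑ m, R c m d m))
              + ((Dmu x y - Dmu y x) * (n - 1)) * (ginv c d * g c d)) := by
            refine Finset.sum_congr rfl fun c _ => Finset.sum_congr rfl fun d _ => ?_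
            ring
        _ = (- (Dlam x y - Dlam y x)) * (∑ c, ∑ d, ginv c d * (∑ m, R c m d m))
            + ((Dmu x y - Dmu y x) * (n - 1)) * (∑ c, ∑ d, ginv c d * g c d) :=
            sum2_lin _ _ _ _
        _ = - (Dlam x y - Dlam y x) * S + (Dmu x y - Dmu y x) * ((n - 1) * n) := by
            rw [← hSdef, htr]; ring
    have hRc : (∑ c, ∑ d, ginv c d * ((∑ k, R x y c k * (∑ m, R k m d m))
          + ∑ k, R x y d k * (∑ m, R c m k m))) = 0 := by
      have : (∑ c, ∑ d, ginv c d * ((∑ k, R x y c k * (∑ m, R k m d m))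
            + ∑ k, R x y d k * (∑ m, R c m k m)))
          = (∑ c, ∑ d, ginv c d * (∑ k, R x y c k * (∑ m, R k m d m)))
            + ∑ c, ∑ d, ginv c d * (∑ k, R x y d k * (∑ m, R c m k m)) := by
        rw [← Finset.sum_add_distrib]
        refine Finset.sum_congr rfl fun c _ => ?_
        rw [← Finset.sum_add_distrib]
        exact Finset.sum_congr rfl fun d _ => by ring
      rw [this, hX1 x y, hX2 x y]
      ring
    have hfin : - (Dlam x y - Dlam y x) * S + (Dmu x y - Dmu y x) * ((n - 1) * n) = 0 := by
      rw [← hLc, hcon, hRc]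
    have hnn : n * (n - 1) ≠ 0 := mul_ne_zero hn0 hn1
    rw [hc0, div_mul_eq_mul_div, eq_div_iff hnn]
    linear_combination hfin
  have hRldef : ∀ a b c d, Rlow R g a b c d = ∑ e, R a b c e * g e d := fun _ _ _ _ => rfl
  have hBrdef : ∀ p q r s t u, Brk R g p q r s t u
      = ∑ k, ∑ m, R p q r k * R s t u m * g k m := fun _ _ _ _ _ _ => rfl
  -- lowered commutator equals A * U
  have hCommL : ∀ x y c d e f,
      (∑ m, (D2R x y c d e m - D2R y x c d e m) * g m f)
        = (Dlam x y - Dlam y x)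
            * (Rlow R g c d e f + c0 * (g d e * g c f - g c e * g d f)) := by
    intro x y c d e f
    calc (∑ m, (D2R x y c d e m - D2R y x c d e m) * g m f)
        = ∑ m, ((Dlam x y - Dlam y x) * (R c d e m * g m f)
            + (Dmu x y - Dmu y x)
              * ((if c = m then (1:ℝ) else 0) * (g d e * g m f)
                  - (if d = m then (1:ℝ) else 0) * (g c e * g m f))) := by
          refine Finset.sum_congr rfl fun m _ => ?_
          rw [hCommR x y c d e m]; ring
      _ = (Dlam x y - Dlam y x) * (∑ m, R c d e m * g m f)
          + (Dmu x y - Dmu y x)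
            * ((∑ m, (if c = m then (1:ℝ) else 0) * (g d e * g m f))
                - ∑ m, (if d = m then (1:ℝ) else 0) * (g c e * g m f)) := by
          rw [Finset.sum_add_distrib, ← Finset.mul_sum, ← Finset.mul_sum,
            Finset.sum_sub_distrib]
      _ = (Dlam x y - Dlam y x)
            * (Rlow R g c d e f + c0 * (g d e * g c f - g c e * g d f)) := by
          rw [dsum1 c (fun m => g d e * g m f), dsum1 d (fun m => g c e * g m f),
            hBA x y, hRldef c d e f]
          ring
  -- bracket symmetry
  have hBrSym : ∀ p q r s t u, Brk R g p q r s t u = Brk R g s t u p q r := by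
    intro p q r s t u
    rw [hBrdef, hBrdef, Finset.sum_comm]
    refine Finset.sum_congr rfl fun k _ => Finset.sum_congr rfl fun m _ => ?_
    rw [hg m k]; ring
  -- the quadratic (Ricci identity) side in bracket form
  have hQcL : ∀ x y c d e f,
      (∑ m, ((- (∑ k, R x y c k * R k d e m) - (∑ k, R x y d k * R c k e m)
          - (∑ k, R x y e k * R c d k m) + (∑ k, R x y k m * R c d e k)) * g m f))
      = Brk R g x y c e f d - Brk R g x y d e f c + Brk R g x y e c d f
        - Brk R g c d e x y f := by
    intro x y c d e f
    have hp1 : (∑ m, (∑ k, R x y c k * R k d e m) * g m f) = - Brk R g x y c e f d := by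
      rw [sum_lower (fun k => R x y c k) (fun k m => R k d e m) g f, hBrdef,
        ← toBr (fun k => R x y c k) (fun m => R e f d m) g hg, ← Finset.sum_neg_distrib]
      refine Finset.sum_congr rfl fun k _ => ?_
      have hflip : (∑ m, R k d e m * g m f) = - ∑ m, R e f d m * g m k := by
        rw [← hRldef, ← hRldef, hRlPair k d e f, hRlA2 e f k d]
      rw [hflip]; ring
    have hp2 : (∑ m, (∑ k, R x y d k * R c k e m) * g m f) = Brk R g x y d e f c := by
      rw [sum_lower (fun k => R x y d k) (fun k m => R c k e m) g f, hBrdef,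
        ← toBr (fun k => R x y d k) (fun m => R e f c m) g hg]
      refine Finset.sum_congr rfl fun k _ => ?_
      have hflip : (∑ m, R c k e m * g m f) = ∑ m, R e f c m * g m k := by
        rw [← hRldef, ← hRldef, hRlPair c k e f]
      rw [hflip]
    have hp3 : (∑ m, (∑ k, R x y e k * R c d k m) * g m f) = - Brk R g x y e c d f := by
      rw [sum_lower (fun k => R x y e k) (fun k m => R c d k m) g f, hBrdef,
        ← toBr (fun k => R x y e k) (fun m => R c d f m) g hg, ← Finset.sum_neg_distrib]
      refine Finset.sum_congr rfl fun k _ => ?_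
      have hflip : (∑ m, R c d k m * g m f) = - ∑ m, R c d f m * g m k := by
        rw [← hRldef, ← hRldef, hRlA2 c d k f]
      rw [hflip]; ring
    have hp4 : (∑ m, (∑ k, R c d e k * R x y k m) * g m f) = - Brk R g c d e x y f := by
      rw [sum_lower (fun k => R c d e k) (fun k m => R x y k m) g f, hBrdef,
        ← toBr (fun k => R c d e k) (fun m => R x y f m) g hg, ← Finset.sum_neg_distrib]
      refine Finset.sum_congr rfl fun k _ => ?_
      have hflip : (∑ m, R x y k m * g m f) = - ∑ m, R x y f m * g m k := by
        rw [← hRldef, ← hRldef, hRlA2 x y k f]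
      rw [hflip]; ring
    have hsplit : (∑ m, ((- (∑ k, R x y c k * R k d e m) - (∑ k, R x y d k * R c k e m)
          - (∑ k, R x y e k * R c d k m) + (∑ k, R x y k m * R c d e k)) * g m f))
        = - (∑ m, (∑ k, R x y c k * R k d e m) * g m f)
          - (∑ m, (∑ k, R x y d k * R c k e m) * g m f)
          - (∑ m, (∑ k, R x y e k * R c d k m) * g m f)
          + (∑ m, (∑ k, R c d e k * R x y k m) * g m f) := by
      calc (∑ m, ((- (∑ k, R x y c k * R k d e m) - (∑ k, R x y d k * R c k e m)
              - (∑ k, R x y e k * R c d k m) + (∑ k, R x y k m * R c d e k)) * g m f))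
          = ∑ m, (- ((∑ k, R x y c k * R k d e m) * g m f)
              - ((∑ k, R x y d k * R c k e m) * g m f)
              - ((∑ k, R x y e k * R c d k m) * g m f)
              + ((∑ k, R c d e k * R x y k m) * g m f)) := by
            refine Finset.sum_congr rfl fun m _ => ?_
            rw [show (∑ k, R x y k m * R c d e k) = ∑ k, R c d e k * R x y k m from
              Finset.sum_congr rfl fun k _ => by ring]
            ring
        _ = - (∑ m, (∑ k, R x y c k * R k d e m) * g m f)
            - (∑ m, (∑ k, R x y d k * R c k e m) * g m f)
            - (∑ m, (∑ k, R x y e k * R c d k m) * g m f)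
            + (∑ m, (∑ k, R c d e k * R x y k m) * g m f) := by
            rw [Finset.sum_add_distrib, Finset.sum_sub_distrib, Finset.sum_sub_distrib,
              Finset.sum_neg_distrib]
    rw [hsplit, hp1, hp2, hp3, hp4]
    ring
  -- the key identity
  have hKey : ∀ x y c d e f,
      (Dlam x y - Dlam y x)
          * (Rlow R g c d e f + c0 * (g d e * g c f - g c e * g d f))
      = Brk R g x y c e f d - Brk R g x y d e f c + Brk R g x y e c d f
        - Brk R g c d e x y f := by
    intro x y c d e f
    have h1 : (∑ m, (D2R x y c d e m - D2R y x c d e m) * g m f)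
        = ∑ m, ((- (∑ k, R x y c k * R k d e m) - (∑ k, R x y d k * R c k e m)
            - (∑ k, R x y e k * R c d k m) + (∑ k, R x y k m * R c d e k)) * g m f) :=
      Finset.sum_congr rfl fun m _ => by rw [hComm x y c d e m]
    rw [← hCommL x y c d e f, h1, hQcL x y c d e f]
  -- Walker identity
  have hW : ∀ a b c d e f,
      (Dlam a b - Dlam b a) * (Rlow R g c d e f + c0 * (g d e * g c f - g c e * g d f))
      + (Dlam c d - Dlam d c) * (Rlow R g e f a b + c0 * (g f a * g e b - g e a * g f b))
      + (Dlam e f - Dlam f e) * (Rlow R g a b c d + c0 * (g b c * g a d - g a c * g b d))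
      = 0 := by
    intro a b c d e f
    linarith [hKey a b c d e f, hKey c d e f a b, hKey e f a b c d,
      hBrSym e f c a b d, hBrSym a b e c d f, hBrSym c d a e f b]
  -- pair symmetry of U
  have hUpair : ∀ c d e f,
      Rlow R g c d e f + c0 * (g d e * g c f - g c e * g d f)
      = Rlow R g e f c d + c0 * (g f c * g e d - g e c * g f d) := by
    intro c d e f
    rw [hRlPair c d e f, hg d e, hg c f, hg c e, hg d f]
    ring
  -- conclusion
  refine ⟨⟨c0, hmu⟩, ?_⟩
  by_cases hcl : ∀ a b, Dlam a b = Dlam b a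
  · exact Or.inl hcl
  · right
    push_neg at hcl
    obtain ⟨x0, y0, hne⟩ := hcl
    have hA0 : Dlam x0 y0 - Dlam y0 x0 ≠ 0 := sub_ne_zero.mpr hne
    have hU00 : Rlow R g x0 y0 x0 y0 + c0 * (g y0 x0 * g x0 y0 - g x0 x0 * g y0 y0) = 0 := by
      have h := hW x0 y0 x0 y0 x0 y0
      have h2 : (Dlam x0 y0 - Dlam y0 x0)
          * (Rlow R g x0 y0 x0 y0 + c0 * (g y0 x0 * g x0 y0 - g x0 x0 * g y0 y0)) = 0 := by
        linarith
      exact (mul_eq_zero.mp h2).resolve_left hA0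
    have hU2 : ∀ e f,
        Rlow R g x0 y0 e f + c0 * (g y0 e * g x0 f - g x0 e * g y0 f) = 0 := by
      intro e f
      have h := hW x0 y0 x0 y0 e f
      rw [hUpair e f x0 y0, hU00] at h
      have h2 : (Dlam x0 y0 - Dlam y0 x0)
          * (Rlow R g x0 y0 e f + c0 * (g y0 e * g x0 f - g x0 e * g y0 f)) = 0 := by
        linarith
      exact (mul_eq_zero.mp h2).resolve_left hA0
    intro a b c d
    have h := hW x0 y0 a b c d
    rw [hUpair c d x0 y0, hU2 c d, hU2 a b] at h
    have h2 : (Dlam x0 y0 - Dlam y0 x0)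
        * (Rlow R g a b c d + c0 * (g b c * g a d - g a c * g b d)) = 0 := by
      linarith
    have h3 := (mul_eq_zero.mp h2).resolve_left hA0
    have h4 : (∑ e, R a b c e * g e d) + c0 * (g b c * g a d - g a c * g b d) = 0 := h3
    linear_combination h4
end

section
/- In a weakly Ricci symmetric manifold of dimension n > 2 with nonsingular Ricci tensor, the covector A − B is closed (∇_a(A−B)_b = ∇_b(A−B)_a) if and only if R_{dm}R_{bac}^m + R_{bm}R_{adc}^m + R_{am}R_{dbc}^m = 0 for all indices. -/
open Finset

theorem wrs_closed_iff {ι : Type*} [Fintype ι] [DecidableEq ι]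
    (R : ι → ι → ι → ι → ℝ)            -- R a b c d = R_{abc}{}^d
    (DR : ι → ι → ι → ι → ι → ℝ)        -- DR x a b c d = ∇_x R_{abc}{}^d
    (D2R : ι → ι → ι → ι → ι → ι → ℝ)   -- D2R x y a b c d = ∇_x ∇_y R_{abc}{}^d
    (hAnti : ∀ a b c d, R a b c d = - R b a c d)
    (hDAnti : ∀ x a b c d, DR x a b c d = - DR x b a c d)
    (hD2Anti : ∀ x y a b c d, D2R x y a b c d = - D2R x y b a c d)
    (hB1 : ∀ a b c d, R a b c d + R b c a d + R c a b d = 0)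
    (hB2 : ∀ a b c d e, DR a b c d e + DR b c a d e + DR c a b d e = 0)
    (hDB2 : ∀ x a b c d e,
      D2R x a b c d e + D2R x b c a d e + D2R x c a b d e = 0)
    (hComm : ∀ x y c d e f,
      D2R x y c d e f - D2R y x c d e f =
        - (∑ k, R x y c k * R k d e f) - (∑ k, R x y d k * R c k e f)
        - (∑ k, R x y e k * R c d k f) + (∑ k, R x y k f * R c d e k))
    (g ginv : ι → ι → ℝ)
    (hg : ∀ a b, g a b = g b a)
    (hginvsym : ∀ a b, ginv a b = ginv b a)
    (hginv : ∀ a b, (∑ m, ginv a m * g m b) = if a = b then (1:ℝ) else 0)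
    (hPair : ∀ a b c d, (∑ e, R a b c e * g e d) = ∑ e, R c d a e * g e b)
    (Ric : ι → ι → ℝ) (hRicdef : ∀ a b, Ric a b = ∑ m, R a m b m)
    (hRicSym : ∀ a b, Ric a b = Ric b a)
    (hRicNe : Ric ≠ 0)
    (Acov Bcov Dcov : ι → ℝ)
    (hAne : Acov ≠ 0) (hBne : Bcov ≠ 0) (hDne : Dcov ≠ 0)
    (hWRS : ∀ x b c, (∑ m, DR x b m c m)
      = Acov x * Ric b c + Bcov b * Ric x c + Dcov c * Ric x b)
    (DA DB DD : ι → ι → ℝ)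
    (hWRS2 : ∀ x a b c, (∑ m, D2R x a b m c m)
      = DA x a * Ric b c + Acov a * (∑ m, DR x b m c m)
        + DB x b * Ric a c + Bcov b * (∑ m, DR x a m c m)
        + DD x c * Ric a b + Dcov c * (∑ m, DR x a m b m))
    (hn : 2 < Fintype.card ι)
    (hdet : (Matrix.of fun a b => ∑ k, ginv a k * Ric k b).det ≠ 0) :
    (∀ a b, DA a b - DB a b = DA b a - DB b a)
    ↔ (∀ a b c d,
        (∑ m, Ric d m * R b a c m) + (∑ m, Ric b m * R a d c m)
        + (∑ m, Ric a m * R d b c m) = 0) := by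
  -- contracted commutator (Ricci identity applied to the Ricci tensor)
  have hcomm : ∀ x a b c, (∑ m, D2R x a b m c m) - (∑ m, D2R a x b m c m)
      = -(∑ k, R x a b k * Ric k c) - (∑ k, R x a c k * Ric b k) := by
    intro x a b c
    have h1 : (∑ m, ∑ k, R x a b k * R k m c m) = ∑ k, R x a b k * Ric k c := by
      rw [Finset.sum_comm]
      refine Finset.sum_congr rfl fun k _ => ?_
      rw [← Finset.mul_sum, ← hRicdef]
    have h3 : (∑ m, ∑ k, R x a c k * R b m k m) = ∑ k, R x a c k * Ric b k := by
      rw [Finset.sum_comm]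
      refine Finset.sum_congr rfl fun k _ => ?_
      rw [← Finset.mul_sum, ← hRicdef]
    have h24 : (∑ m, ∑ k, R x a m k * R b k c m)
        = ∑ m, ∑ k, R x a k m * R b m c k := Finset.sum_comm
    calc (∑ m, D2R x a b m c m) - (∑ m, D2R a x b m c m)
        = ∑ m, (D2R x a b m c m - D2R a x b m c m) := by
          rw [Finset.sum_sub_distrib]
      _ = ∑ m, (- (∑ k, R x a b k * R k m c m) - (∑ k, R x a m k * R b k c m)
            - (∑ k, R x a c k * R b m k m) + (∑ k, R x a k m * R b m c k)) :=
          Finset.sum_congr rfl fun m _ => hComm x a b m c m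
      _ = -(∑ m, ∑ k, R x a b k * R k m c m) - (∑ m, ∑ k, R x a m k * R b k c m)
            - (∑ m, ∑ k, R x a c k * R b m k m)
            + (∑ m, ∑ k, R x a k m * R b m c k) := by
          simp [Finset.sum_add_distrib, Finset.sum_sub_distrib]
      _ = -(∑ k, R x a b k * Ric k c) - (∑ k, R x a c k * Ric b k) := by
          rw [h1, h3, h24]; ring
  -- first Bianchi identity, contracted with Ricci
  have hBsum : ∀ p q r c, (∑ k, R p q r k * Ric k c) + (∑ k, R q r p k * Ric k c)
      + (∑ k, R r p q k * Ric k c) = 0 := by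
    intro p q r c
    rw [← Finset.sum_add_distrib, ← Finset.sum_add_distrib]
    exact Finset.sum_eq_zero fun k _ => by linear_combination Ric k c * hB1 p q r k
  -- antisymmetry inside a contraction
  have hflip : ∀ p q r s, (∑ k, R p q r k * Ric s k) = -(∑ m, Ric s m * R q p r m) := by
    intro p q r s
    rw [← Finset.sum_neg_distrib]
    exact Finset.sum_congr rfl fun k _ => by rw [hAnti p q r k]; ring
  -- the fundamental identity from WRS second derivatives
  have EE : ∀ x a b c,
      -(∑ k, R x a b k * Ric k c) - (∑ k, R x a c k * Ric b k)
      = (DA x a - DA a x) * Ric b c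
        + (DB x b - Bcov x * Bcov b) * Ric a c
        - (DB a b - Bcov a * Bcov b) * Ric x c
        + (DD x c - Bcov x * Dcov c) * Ric a b
        - (DD a c - Bcov a * Dcov c) * Ric x b := by
    intro x a b c
    have h := hcomm x a b c
    rw [hWRS2 x a b c, hWRS2 a x b c] at h
    simp only [hWRS] at h
    linear_combination (-h) + (Bcov b * Dcov c + Dcov b * Dcov c) * hRicSym x a
  -- the key cyclic identity
  have key : ∀ a b d c,
      ((DA d a - DB d a) - (DA a d - DB a d)) * Ric b c
      + ((DA a b - DB a b) - (DA b a - DB b a)) * Ric d c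
      + ((DA b d - DB b d) - (DA d b - DB d b)) * Ric a c
      = (∑ m, Ric d m * R b a c m) + (∑ m, Ric b m * R a d c m)
        + (∑ m, Ric a m * R d b c m) := by
    intro a b d c
    linear_combination (-(EE d a b c)) - (EE a b d c) - (EE b d a c)
      - hBsum d a b c - hflip d a c b - hflip a b c d - hflip b d c a
      - (DD d c - Bcov d * Dcov c) * hRicSym a b
      - (DD a c - Bcov a * Dcov c) * hRicSym b d
      - (DD b c - Bcov b * Dcov c) * hRicSym d a
  constructor
  · intro hcl a b c d
    linear_combination Ric b c * hcl d a + Ric d c * hcl a b + Ric a c * hcl b d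
      - key a b d c
  · intro hT
    have hP : ∀ a b d c,
        ((DA d a - DB d a) - (DA a d - DB a d)) * Ric b c
        + ((DA a b - DB a b) - (DA b a - DB b a)) * Ric d c
        + ((DA b d - DB b d) - (DA d b - DB d b)) * Ric a c = 0 :=
      fun a b d c => (key a b d c).trans (hT a b c d)
    -- invert the Ricci matrix
    have hfact : (Matrix.of fun a b => ∑ k, ginv a k * Ric k b)
        = (Matrix.of ginv) * (Matrix.of Ric) := by
      ext a b; simp [Matrix.mul_apply]
    have hdetM : (Matrix.of Ric).det ≠ 0 := by
      intro h
      exact hdet (by rw [hfact, Matrix.det_mul, h, mul_zero])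
    set N := (Matrix.of Ric)⁻¹ with hN
    have hMN : (Matrix.of Ric) * N = 1 :=
      Matrix.mul_nonsing_inv _ (isUnit_iff_ne_zero.mpr hdetM)
    have hδ : ∀ b e, (∑ c, Ric b c * N c e) = if b = e then (1:ℝ) else 0 := by
      intro b e
      have h := congrFun (congrFun hMN b) e
      simpa [Matrix.mul_apply, Matrix.one_apply] using h
    have hQ : ∀ a b d e,
        ((DA d a - DB d a) - (DA a d - DB a d)) * (if b = e then (1:ℝ) else 0)
        + ((DA a b - DB a b) - (DA b a - DB b a)) * (if d = e then (1:ℝ) else 0)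
        + ((DA b d - DB b d) - (DA d b - DB d b)) * (if a = e then (1:ℝ) else 0)
        = 0 := by
      intro a b d e
      have hs : (∑ c, (((DA d a - DB d a) - (DA a d - DB a d)) * Ric b c
          + ((DA a b - DB a b) - (DA b a - DB b a)) * Ric d c
          + ((DA b d - DB b d) - (DA d b - DB d b)) * Ric a c) * N c e) = 0 :=
        Finset.sum_eq_zero fun c _ => by rw [hP a b d c, zero_mul]
      have hexp : ((DA d a - DB d a) - (DA a d - DB a d)) * (∑ c, Ric b c * N c e)
          + ((DA a b - DB a b) - (DA b a - DB b a)) * (∑ c, Ric d c * N c e)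
          + ((DA b d - DB b d) - (DA d b - DB d b)) * (∑ c, Ric a c * N c e)
          = 0 := by
        rw [Finset.mul_sum, Finset.mul_sum, Finset.mul_sum,
          ← Finset.sum_add_distrib, ← Finset.sum_add_distrib, ← hs]
        exact Finset.sum_congr rfl fun c _ => by ring
      rwa [hδ, hδ, hδ] at hexp
    have htr : ∀ a d, ((Fintype.card ι : ℝ) - 2)
        * ((DA d a - DB d a) - (DA a d - DB a d)) = 0 := by
      intro a d
      have hs := Finset.sum_eq_zero (fun b (_ : b ∈ Finset.univ) => hQ a b d b)
      simp only [eq_self_iff_true, if_true, mul_one, mul_ite, mul_zero,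
        Finset.sum_add_distrib, Finset.sum_ite_eq, Finset.mem_univ,
        Finset.sum_const, Finset.card_univ, nsmul_eq_mul] at hs
      linear_combination hs
    intro a b
    have h1 := htr b a
    have hc : ((Fintype.card ι : ℝ) - 2) ≠ 0 := by
      have : (2:ℝ) < (Fintype.card ι : ℝ) := by exact_mod_cast hn
      linarith
    rcases mul_eq_zero.mp h1 with h | h
    · exact absurd h hc
    · linarith
end

section
/- In a conformally flat weakly Ricci symmetric manifold of dimension n > 3 with nonsingular Ricci tensor, the covector A − B is closed. -/
/-!
Commuting the two covariant derivatives of the Ricci tensor (Ricci identity) and summing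
cyclically over the three lower indices, the first Bianchi identity and the conformally flat
form of the curvature tensor make all quadratic curvature terms cancel. Inserting the weakly
Ricci symmetric condition and its covariant derivative, what remains is
`ω_{xa} R_{bc} + ω_{ab} R_{xc} + ω_{bx} R_{ac} = 0` with `ω = d(A − B)`; contracting with the
inverse Ricci tensor gives `(n − 2) ω = 0`.
-/

open Finset

section Curvature

variable {ι K : Type*} [Fintype ι] [CommRing K]

theorem contracted_ricci_identity {R : ι → ι → ι → ι → K}
    {D2R : ι → ι → ι → ι → ι → ι → K} {Ric : ι → ι → K}
    (hComm : ∀ x y c d e f,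
      D2R x y c d e f - D2R y x c d e f =
        - (∑ k, R x y c k * R k d e f) - (∑ k, R x y d k * R c k e f)
        - (∑ k, R x y e k * R c d k f) + (∑ k, R x y k f * R c d e k))
    (hRicdef : ∀ a b, Ric a b = ∑ m, R a m b m) (x a b c : ι) :
    (∑ m, D2R x a b m c m) - (∑ m, D2R a x b m c m)
      = -(∑ k, R x a b k * Ric k c) - (∑ k, R x a c k * Ric b k) := by
  rw [← sum_sub_distrib]
  simp only [hComm, sum_add_distrib, sum_sub_distrib, sum_neg_distrib, hRicdef, mul_sum]
  -- after renaming dummy indices the two terms not contracting to `Ric` cancel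
  rw [sum_comm (γ := ι) (f := fun m k => R x a m k * R b k c m),
    sum_comm (f := fun m k => R x a b k * R k m c m),
    sum_comm (f := fun m k => R x a c k * R b m k m)]
  ring

theorem sum_cyclic_mul_eq_zero_of_bianchi {R : ι → ι → ι → ι → K}
    (hB1 : ∀ a b c d, R a b c d + R b c a d + R c a b d = 0) (v : ι → K) (x a b : ι) :
    (∑ k, R x a b k * v k) + (∑ k, R a b x k * v k) + (∑ k, R b x a k * v k) = 0 := by
  simp only [← sum_add_distrib, ← add_mul, hB1, zero_mul, sum_const_zero]

section ConformallyFlat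

variable [DecidableEq ι]

/-- The Weyl tensor vanishes when `α = 1 / (n - 2)` and `β = S / ((n - 1) (n - 2))`, `S` the
scalar curvature; only this shape of the curvature tensor matters below. -/
def IsConformallyFlat (R : ι → ι → ι → ι → K) (Ric g ginv : ι → ι → K) (α β : K) : Prop :=
  ∀ a b c d,
    R a b c d
    + α * ((if a = d then (1:K) else 0) * Ric b c
         - (if b = d then (1:K) else 0) * Ric a c
         + (∑ e, Ric a e * ginv e d) * g b c
         - (∑ e, Ric b e * ginv e d) * g a c)
    - β * ((if a = d then (1:K) else 0) * g b c
         - (if b = d then (1:K) else 0) * g a c) = 0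

theorem sum_mul_eq_of_conformallyFlat {R : ι → ι → ι → ι → K} {Ric g ginv : ι → ι → K}
    {α β : K}
    (hCF : IsConformallyFlat R Ric g ginv α β)
    (v : ι → K) (p q c : ι) :
    ∑ k, R p q c k * v k
      = -α * (v p * Ric q c - v q * Ric p c
          + g q c * ∑ k, (∑ e, Ric p e * ginv e k) * v k
          - g p c * ∑ k, (∑ e, Ric q e * ginv e k) * v k)
        + β * (v p * g q c - v q * g p c) := by
  have hR : ∀ k, R p q c k * v k =
      -α * ((if p = k then (1:K) else 0) * (v k * Ric q c)
        - (if q = k then (1:K) else 0) * (v k * Ric p c)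
        + g q c * ((∑ e, Ric p e * ginv e k) * v k)
        - g p c * ((∑ e, Ric q e * ginv e k) * v k))
      + β * ((if p = k then (1:K) else 0) * (v k * g q c)
        - (if q = k then (1:K) else 0) * (v k * g p c)) := fun k => by
    linear_combination v k * hCF p q c k
  simp only [hR, sum_add_distrib, sum_sub_distrib, ← mul_sum, ite_mul, one_mul, zero_mul,
    sum_ite_eq, mem_univ, if_true]

theorem cyclic_sum_mul_ricci_eq_zero_of_conformallyFlat {R : ι → ι → ι → ι → K}
    {Ric g ginv : ι → ι → K} {α β : K}
    (hCF : IsConformallyFlat R Ric g ginv α β)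
    (hRicSym : ∀ a b, Ric a b = Ric b a) (hginvsym : ∀ a b, ginv a b = ginv b a) (x a b c : ι) :
    (∑ k, R x a c k * Ric b k) + (∑ k, R a b c k * Ric x k) + (∑ k, R b x c k * Ric a k) = 0 := by
  have hQ : ∀ p q, ∑ k, (∑ e, Ric p e * ginv e k) * Ric q k
      = ∑ k, (∑ e, Ric q e * ginv e k) * Ric p k := by
    intro p q
    simp only [sum_mul]
    rw [sum_comm]
    refine sum_congr rfl fun k _ => sum_congr rfl fun e _ => ?_
    rw [hginvsym, hRicSym p, hRicSym q]
    ring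
  rw [sum_mul_eq_of_conformallyFlat hCF (Ric b), sum_mul_eq_of_conformallyFlat hCF (Ric x),
    sum_mul_eq_of_conformallyFlat hCF (Ric a)]
  linear_combination (β * g a c - α * Ric a c) * hRicSym b x
    + (β * g b c - α * Ric b c) * hRicSym x a + (β * g x c - α * Ric x c) * hRicSym a b
    - α * g a c * hQ x b - α * g b c * hQ a x - α * g x c * hQ b a

theorem cyclic_sum_commutator_eq_zero_of_conformallyFlat {R : ι → ι → ι → ι → K}
    {D2R : ι → ι → ι → ι → ι → ι → K} {Ric g ginv : ι → ι → K} {α β : K}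
    (hComm : ∀ x y c d e f,
      D2R x y c d e f - D2R y x c d e f =
        - (∑ k, R x y c k * R k d e f) - (∑ k, R x y d k * R c k e f)
        - (∑ k, R x y e k * R c d k f) + (∑ k, R x y k f * R c d e k))
    (hRicdef : ∀ a b, Ric a b = ∑ m, R a m b m)
    (hB1 : ∀ a b c d, R a b c d + R b c a d + R c a b d = 0)
    (hCF : IsConformallyFlat R Ric g ginv α β)
    (hRicSym : ∀ a b, Ric a b = Ric b a) (hginvsym : ∀ a b, ginv a b = ginv b a) (x a b c : ι) :
    (∑ m, D2R x a b m c m) - (∑ m, D2R a x b m c m)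
      + ((∑ m, D2R a b x m c m) - (∑ m, D2R b a x m c m))
      + ((∑ m, D2R b x a m c m) - (∑ m, D2R x b a m c m)) = 0 := by
  rw [contracted_ricci_identity hComm hRicdef, contracted_ricci_identity hComm hRicdef,
    contracted_ricci_identity hComm hRicdef]
  linear_combination -sum_cyclic_mul_eq_zero_of_bianchi hB1 (Ric · c) x a b
    - cyclic_sum_mul_ricci_eq_zero_of_conformallyFlat hCF hRicSym hginvsym x a b c

end ConformallyFlat

end Curvature

section Curl

variable {ι K : Type*} [CommRing K]

/-- With `T = ∇(A − B)` these are the components of `d(A − B)`. -/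
def curl (T : ι → ι → K) (u v : ι) : K := T u v - T v u

theorem cyclic_sum_curl_mul_eq_zero {Ric : ι → ι → K} {DRic : ι → ι → ι → K}
    {D2Ric : ι → ι → ι → ι → K} {A B D : ι → K} {DA DB DD : ι → ι → K}
    (hRicSym : ∀ a b, Ric a b = Ric b a)
    (hWRS : ∀ x b c, DRic x b c = A x * Ric b c + B b * Ric x c + D c * Ric x b)
    (hWRS2 : ∀ x a b c, D2Ric x a b c
      = DA x a * Ric b c + A a * DRic x b c + DB x b * Ric a c + B b * DRic x a c
        + DD x c * Ric a b + D c * DRic x a b)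
    {x a b c : ι}
    (hcyc : D2Ric x a b c - D2Ric a x b c + (D2Ric a b x c - D2Ric b a x c)
      + (D2Ric b x a c - D2Ric x b a c) = 0) :
    curl (DA - DB) x a * Ric b c + curl (DA - DB) a b * Ric x c
      + curl (DA - DB) b x * Ric a c = 0 := by
  simp only [hWRS2, hWRS] at hcyc
  simp only [curl, Pi.sub_apply]
  linear_combination hcyc + (D a * D c + DD a c) * hRicSym x b
    + (D b * D c + DD b c) * hRicSym a x + (D c * D x + DD x c) * hRicSym b a

theorem curl_neg_swap (T : ι → ι → K) (u v : ι) : curl T v u = -curl T u v :=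
  (neg_sub _ _).symm

end Curl

theorem eq_zero_of_cyclic_sum_mul_eq_zero {ι K : Type*} [Fintype ι] [DecidableEq ι] [Field K]
    {M : Matrix ι ι K} (hM : IsUnit M.det) (hn : (Fintype.card ι : K) ≠ 2) {ω : ι → ι → K}
    (hω : ∀ u v, ω v u = -ω u v)
    (h : ∀ x a b c, ω x a * M b c + ω a b * M x c + ω b x * M a c = 0) : ω = 0 := by
  ext u v
  have hcontract : (Fintype.card ι : K) * ω u v + 2 * ω v u
      = ∑ b, ∑ c, (ω u v * M b c + ω v b * M u c + ω b u * M v c) * M⁻¹ c b := by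
    simp only [add_mul, mul_assoc, sum_add_distrib, ← mul_sum, ← Matrix.mul_apply,
      Matrix.mul_nonsing_inv _ hM, Matrix.one_apply, mul_ite, mul_one, mul_zero, ↓reduceIte,
      sum_ite_eq, mem_univ, sum_const, card_univ, nsmul_eq_mul]
    ring
  have hsum : (Fintype.card ι : K) * ω u v + 2 * ω v u = 0 := by
    simp only [hcontract, h, zero_mul, sum_const_zero]
  have : ((Fintype.card ι : K) - 2) * ω u v = 0 := by
    linear_combination hsum - 2 * hω u v
  simpa [sub_ne_zero.mpr hn] using this

theorem wrs_conformally_flat_closed_general {ι : Type*} [Fintype ι] [DecidableEq ι]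
    (R : ι → ι → ι → ι → ℝ)            -- R a b c d = R_{abc}{}^d
    (DR : ι → ι → ι → ι → ι → ℝ)        -- DR x a b c d = ∇_x R_{abc}{}^d
    (D2R : ι → ι → ι → ι → ι → ι → ℝ)   -- D2R x y a b c d = ∇_x ∇_y R_{abc}{}^d
    (hB1 : ∀ a b c d, R a b c d + R b c a d + R c a b d = 0)
    (hComm : ∀ x y c d e f,
      D2R x y c d e f - D2R y x c d e f =
        - (∑ k, R x y c k * R k d e f) - (∑ k, R x y d k * R c k e f)
        - (∑ k, R x y e k * R c d k f) + (∑ k, R x y k f * R c d e k))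
    (g ginv : ι → ι → ℝ)
    (hginvsym : ∀ a b, ginv a b = ginv b a)
    (Ric : ι → ι → ℝ) (hRicdef : ∀ a b, Ric a b = ∑ m, R a m b m)
    (hRicSym : ∀ a b, Ric a b = Ric b a)
    (Acov Bcov Dcov : ι → ℝ)
    (hWRS : ∀ x b c, (∑ m, DR x b m c m)
      = Acov x * Ric b c + Bcov b * Ric x c + Dcov c * Ric x b)
    (DA DB DD : ι → ι → ℝ)
    (hWRS2 : ∀ x a b c, (∑ m, D2R x a b m c m)
      = DA x a * Ric b c + Acov a * (∑ m, DR x b m c m)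
        + DB x b * Ric a c + Bcov b * (∑ m, DR x a m c m)
        + DD x c * Ric a b + Dcov c * (∑ m, DR x a m b m))
    (hn : 3 < Fintype.card ι)
    (hdet : (Matrix.of fun a b => ∑ k, ginv a k * Ric k b).det ≠ 0)
    (S : ℝ)
    (hCF : ∀ a b c d,
      R a b c d
      + (1 / ((Fintype.card ι : ℝ) - 2)) *
          ((if a = d then (1:ℝ) else 0) * Ric b c
           - (if b = d then (1:ℝ) else 0) * Ric a c
           + (∑ e, Ric a e * ginv e d) * g b c
           - (∑ e, Ric b e * ginv e d) * g a c)
      - (S / (((Fintype.card ι : ℝ) - 1) * ((Fintype.card ι : ℝ) - 2))) *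
          ((if a = d then (1:ℝ) else 0) * g b c
           - (if b = d then (1:ℝ) else 0) * g a c) = 0) :
    ∀ a b, DA a b - DB a b = DA b a - DB b a := by
  have hRic : IsUnit (Matrix.of Ric).det := by
    rw [show (Matrix.of fun a b => ∑ k, ginv a k * Ric k b) = Matrix.of ginv * Matrix.of Ric from
      rfl, Matrix.det_mul] at hdet
    exact (right_ne_zero_of_mul hdet).isUnit
  have hcyc := cyclic_sum_commutator_eq_zero_of_conformallyFlat hComm hRicdef hB1 hCF hRicSym
    hginvsym
  have hcurl : curl (DA - DB) = 0 :=
    eq_zero_of_cyclic_sum_mul_eq_zero hRic (by norm_cast; omega) (curl_neg_swap _)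
      fun x a b c => cyclic_sum_curl_mul_eq_zero hRicSym hWRS hWRS2 (hcyc x a b c)
  intro a b
  simpa [curl, sub_eq_zero] using congrFun₂ hcurl a b

theorem wrs_conformally_flat_closed {ι : Type*} [Fintype ι] [DecidableEq ι]
    (R : ι → ι → ι → ι → ℝ)            -- R a b c d = R_{abc}{}^d
    (DR : ι → ι → ι → ι → ι → ℝ)        -- DR x a b c d = ∇_x R_{abc}{}^d
    (D2R : ι → ι → ι → ι → ι → ι → ℝ)   -- D2R x y a b c d = ∇_x ∇_y R_{abc}{}^d
    (hAnti : ∀ a b c d, R a b c d = - R b a c d)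
    (hDAnti : ∀ x a b c d, DR x a b c d = - DR x b a c d)
    (hD2Anti : ∀ x y a b c d, D2R x y a b c d = - D2R x y b a c d)
    (hB1 : ∀ a b c d, R a b c d + R b c a d + R c a b d = 0)
    (hB2 : ∀ a b c d e, DR a b c d e + DR b c a d e + DR c a b d e = 0)
    (hDB2 : ∀ x a b c d e,
      D2R x a b c d e + D2R x b c a d e + D2R x c a b d e = 0)
    (hComm : ∀ x y c d e f,
      D2R x y c d e f - D2R y x c d e f =
        - (∑ k, R x y c k * R k d e f) - (∑ k, R x y d k * R c k e f)
        - (∑ k, R x y e k * R c d k f) + (∑ k, R x y k f * R c d e k))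
    (g ginv : ι → ι → ℝ)
    (hg : ∀ a b, g a b = g b a)
    (hginvsym : ∀ a b, ginv a b = ginv b a)
    (hginv : ∀ a b, (∑ m, ginv a m * g m b) = if a = b then (1:ℝ) else 0)
    (hPair : ∀ a b c d, (∑ e, R a b c e * g e d) = ∑ e, R c d a e * g e b)
    (Ric : ι → ι → ℝ) (hRicdef : ∀ a b, Ric a b = ∑ m, R a m b m)
    (hRicSym : ∀ a b, Ric a b = Ric b a)
    (hRicNe : Ric ≠ 0)
    (Acov Bcov Dcov : ι → ℝ)
    (hAne : Acov ≠ 0) (hBne : Bcov ≠ 0) (hDne : Dcov ≠ 0)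
    (hWRS : ∀ x b c, (∑ m, DR x b m c m)
      = Acov x * Ric b c + Bcov b * Ric x c + Dcov c * Ric x b)
    (DA DB DD : ι → ι → ℝ)
    (hWRS2 : ∀ x a b c, (∑ m, D2R x a b m c m)
      = DA x a * Ric b c + Acov a * (∑ m, DR x b m c m)
        + DB x b * Ric a c + Bcov b * (∑ m, DR x a m c m)
        + DD x c * Ric a b + Dcov c * (∑ m, DR x a m b m))
    (hn : 3 < Fintype.card ι)
    (hdet : (Matrix.of fun a b => ∑ k, ginv a k * Ric k b).det ≠ 0)
    (S : ℝ) (hSdef : S = ∑ p, ∑ q, ginv p q * Ric p q)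
    (DS : ι → ℝ)
    (hDSdef : ∀ x, DS x = ∑ p, ∑ q, ginv p q * (∑ m, DR x p m q m))
    (D2S : ι → ι → ℝ)
    (hD2Sdef : ∀ x y, D2S x y = ∑ p, ∑ q, ginv p q * (∑ m, D2R x y p m q m))
    (hCF : ∀ a b c d,
      R a b c d
      + (1 / ((Fintype.card ι : ℝ) - 2)) *
          ((if a = d then (1:ℝ) else 0) * Ric b c
           - (if b = d then (1:ℝ) else 0) * Ric a c
           + (∑ e, Ric a e * ginv e d) * g b c
           - (∑ e, Ric b e * ginv e d) * g a c)
      - (S / (((Fintype.card ι : ℝ) - 1) * ((Fintype.card ι : ℝ) - 2))) *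
          ((if a = d then (1:ℝ) else 0) * g b c
           - (if b = d then (1:ℝ) else 0) * g a c) = 0)
    (hCF1 : ∀ x a b c d,
      DR x a b c d
      + (1 / ((Fintype.card ι : ℝ) - 2)) *
          ((if a = d then (1:ℝ) else 0) * (∑ m, DR x b m c m)
           - (if b = d then (1:ℝ) else 0) * (∑ m, DR x a m c m)
           + (∑ e, (∑ m, DR x a m e m) * ginv e d) * g b c
           - (∑ e, (∑ m, DR x b m e m) * ginv e d) * g a c)
      - (DS x / (((Fintype.card ι : ℝ) - 1) * ((Fintype.card ι : ℝ) - 2))) *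
          ((if a = d then (1:ℝ) else 0) * g b c
           - (if b = d then (1:ℝ) else 0) * g a c) = 0)
    (hCF2 : ∀ x y a b c d,
      D2R x y a b c d
      + (1 / ((Fintype.card ι : ℝ) - 2)) *
          ((if a = d then (1:ℝ) else 0) * (∑ m, D2R x y b m c m)
           - (if b = d then (1:ℝ) else 0) * (∑ m, D2R x y a m c m)
           + (∑ e, (∑ m, D2R x y a m e m) * ginv e d) * g b c
           - (∑ e, (∑ m, D2R x y b m e m) * ginv e d) * g a c)
      - (D2S x y / (((Fintype.card ι : ℝ) - 1) * ((Fintype.card ι : ℝ) - 2))) *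
          ((if a = d then (1:ℝ) else 0) * g b c
           - (if b = d then (1:ℝ) else 0) * g a c) = 0) :
    ∀ a b, DA a b - DB a b = DA b a - DB b a :=
  wrs_conformally_flat_closed_general R DR D2R hB1 hComm g ginv hginvsym Ric hRicdef hRicSym Acov
    Bcov Dcov hWRS DA DB DD hWRS2 hn hdet S hCF
end
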